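/- arXiv:1512.06281 — 8 statements merged into one kernel-verified Lean document; each statement's English description precedes it below -/
import Mathlib

section
/- Let n ≥ 2 and m ≥ 1 be integers, and let A₁, …, Aₙ be Hermitian m×m complex matrices such that A(p) := p₁A₁ + ⋯ + pₙAₙ is invertible for every p ∈ ℝⁿ \ {0}. Then for every p ∈ ℝⁿ \ {0} the number of positive eigenvalues of A(p), counted with multiplicity, equals the number of negative eigenvalues of A(p), counted with multiplicity; in particular m is even. -/
/-! In an orthonormal eigenbasis the form `x ↦ x* N x` of a Hermitian matrix `N` is
`∑ λᵢ |xᵢ|²`, so the number of positive eigenvalues of `N` is the largest dimension of a subspace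
on which the form is positive definite. Positivity on a fixed subspace is an open condition on `N`
(compactness of its unit sphere), hence the number of positive eigenvalues is lower semicontinuous,
and so is the number of negative ones, being that of `-N`. For invertible `N` the two add up to
`m`, so both are locally constant along the invertible family `p ↦ A(p)` on the connected set
`ℝⁿ \ {0}`. Since `A(-p) = -A(p)` trades positive for negative eigenvalues, the two counts agree
at every `p`, and `m` is twice either of them. -/

open Matrix Module Finset

open scoped InnerProductSpace Topology

namespace OrthonormalBasis

variable {𝕜 E ι : Type*} [RCLike 𝕜] [NormedAddCommGroup E] [InnerProductSpace 𝕜 E] [Fintype ι]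
  (b : OrthonormalBasis ι 𝕜 E) (d : ι → ℝ)

theorem finrank_le_card_pos_of_forall_sum_pos (V : Submodule 𝕜 E)
    (hV : ∀ x ∈ V, x ≠ 0 → 0 < ∑ i, d i * ‖⟪b i, x⟫_𝕜‖ ^ 2) :
    finrank 𝕜 V ≤ #{i | 0 < d i} := by
  classical
  let coords : V →ₗ[𝕜] {i // 0 < d i} → 𝕜 :=
    LinearMap.pi fun i => (innerₛₗ 𝕜 (b i)).comp V.subtype
  have hinj : Function.Injective coords := by
    refine (injective_iff_map_eq_zero coords).2 fun x hx => ?_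
    by_contra hx0
    have hle : ∑ i, d i * ‖⟪b i, (x : E)⟫_𝕜‖ ^ 2 ≤ 0 := by
      refine Finset.sum_nonpos fun i _ => ?_
      by_cases hi : 0 < d i
      · simp [show ⟪b i, (x : E)⟫_𝕜 = 0 from congrFun hx ⟨i, hi⟩]
      · exact mul_nonpos_of_nonpos_of_nonneg (not_lt.1 hi) (by positivity)
    exact hle.not_gt (hV x x.2 (by simpa using hx0))
  calc finrank 𝕜 V ≤ finrank 𝕜 ({i // 0 < d i} → 𝕜) :=
        LinearMap.finrank_le_finrank_of_injective hinj
    _ = #{i | 0 < d i} := by rw [finrank_fintype_fun_eq_card, Fintype.card_subtype]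

theorem exists_finrank_eq_card_pos_forall_sum_pos :
    ∃ V : Submodule 𝕜 E, finrank 𝕜 V = #{i | 0 < d i} ∧
      ∀ x ∈ V, x ≠ 0 → 0 < ∑ i, d i * ‖⟪b i, x⟫_𝕜‖ ^ 2 := by
  classical
  refine ⟨Submodule.span 𝕜 (b '' {i | 0 < d i}), ?_, fun x hx hx0 => ?_⟩
  · rw [Set.image_eq_range]
    exact (finrank_span_eq_card
      (b.orthonormal.linearIndependent.comp _ Subtype.val_injective)).trans
        (Fintype.card_ofFinset _ _)
  · have hsupp : ∀ i, ¬ 0 < d i → ⟪b i, x⟫_𝕜 = 0 := by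
      rw [← b.coe_toBasis, b.toBasis.mem_span_image] at hx
      intro i hi
      by_contra h
      exact hi (hx (by simpa [b.repr_apply_apply] using h))
    obtain ⟨j, hj⟩ : ∃ j, ⟪b j, x⟫_𝕜 ≠ 0 := by
      by_contra! h
      exact hx0 (b.repr.injective (by ext i; simp [b.repr_apply_apply, h]))
    refine Finset.sum_pos' (fun i _ => ?_) ⟨j, Finset.mem_univ j, ?_⟩
    · by_cases hi : 0 < d i
      · positivity
      · simp [hsupp i hi]
    · have hdj : 0 < d j := by_contra fun h => hj (hsupp j h)
      positivity

end OrthonormalBasis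

namespace Matrix

variable {𝕜 ι : Type*} [RCLike 𝕜] [Fintype ι]

def PosDefOn (N : Matrix ι ι 𝕜) (V : Submodule 𝕜 (EuclideanSpace 𝕜 ι)) : Prop :=
  ∀ x ∈ V, x ≠ 0 → 0 < RCLike.re (star ⇑x ⬝ᵥ N *ᵥ ⇑x)

theorem re_dotProduct_mulVec_smul (N : Matrix ι ι 𝕜) (c : 𝕜) (v : ι → 𝕜) :
    RCLike.re (star (c • v) ⬝ᵥ N *ᵥ (c • v)) = ‖c‖ ^ 2 * RCLike.re (star v ⬝ᵥ N *ᵥ v) := by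
  rw [mulVec_smul, star_smul, smul_dotProduct, dotProduct_smul, smul_smul, smul_eq_mul,
    RCLike.star_def, RCLike.conj_mul]
  norm_cast
  exact RCLike.re_ofReal_mul _ _

theorem PosDefOn.eventually_nhds {N₀ : Matrix ι ι 𝕜} {V : Submodule 𝕜 (EuclideanSpace 𝕜 ι)}
    (h : N₀.PosDefOn V) : ∀ᶠ N in 𝓝 N₀, N.PosDefOn V := by
  have hK : IsCompact (Metric.sphere (0 : EuclideanSpace 𝕜 ι) 1 ∩ V) :=
    (isCompact_sphere 0 1).inter_right V.closed_of_finiteDimensional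
  have hF : Continuous fun z : Matrix ι ι 𝕜 × EuclideanSpace 𝕜 ι =>
      RCLike.re (star ⇑z.2 ⬝ᵥ z.1 *ᵥ ⇑z.2) := by
    fun_prop
  have hsphere : ∀ᶠ N in 𝓝 N₀, ∀ y ∈ Metric.sphere (0 : EuclideanSpace 𝕜 ι) 1 ∩ V,
      0 < RCLike.re (star ⇑y ⬝ᵥ N *ᵥ ⇑y) :=
    hK.eventually_forall_of_forall_eventually fun y ⟨hy1, hyV⟩ =>
      (isOpen_lt continuous_const hF).mem_nhds
        (h y hyV (ne_zero_of_mem_unit_sphere ⟨y, hy1⟩))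
  filter_upwards [hsphere] with N hN x hxV hx0
  have hnorm : ‖x‖ ≠ 0 := norm_ne_zero_iff.2 hx0
  have hx : x = (‖x‖ : 𝕜) • ((‖x‖⁻¹ : 𝕜) • x) := by
    rw [smul_smul, mul_inv_cancel₀ (by exact_mod_cast hnorm), one_smul]
  rw [hx, WithLp.ofLp_smul, re_dotProduct_mulVec_smul]
  refine mul_pos (pow_pos (by simpa using hx0) 2) (hN _ ⟨?_, V.smul_mem _ hxV⟩)
  simp [norm_smul, hnorm]

namespace IsHermitian

variable [DecidableEq ι] {N : Matrix ι ι 𝕜}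

theorem re_dotProduct_mulVec_eq_sum (hN : N.IsHermitian) (x : EuclideanSpace 𝕜 ι) :
    RCLike.re (star ⇑x ⬝ᵥ N *ᵥ ⇑x) =
      ∑ i, hN.eigenvalues i * ‖⟪hN.eigenvectorBasis i, x⟫_𝕜‖ ^ 2 := by
  set b := hN.eigenvectorBasis
  have hb : ∀ i, ⟪b i, WithLp.toLp 2 (N *ᵥ ⇑x)⟫_𝕜 = hN.eigenvalues i * ⟪b i, x⟫_𝕜 := by
    intro i
    have hT := (isSymmetric_toEuclideanLin_iff.mpr hN) (b i) x
    simp only [toLpLin_apply] at hT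
    rw [← hT, hN.mulVec_eigenvectorBasis, WithLp.toLp_smul, WithLp.toLp_ofLp,
      RCLike.real_smul_eq_coe_smul (K := 𝕜), inner_smul_left, RCLike.conj_ofReal]
  rw [dotProduct_comm, ← EuclideanSpace.inner_toLp_toLp, WithLp.toLp_ofLp,
    ← b.sum_inner_mul_inner, map_sum]
  refine Finset.sum_congr rfl fun i _ => ?_
  rw [hb, ← inner_conj_symm, mul_left_comm, RCLike.conj_mul]
  norm_cast

theorem finrank_le_card_pos_eigenvalues (hN : N.IsHermitian)
    {V : Submodule 𝕜 (EuclideanSpace 𝕜 ι)} (hV : N.PosDefOn V) :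
    finrank 𝕜 V ≤ #{i | 0 < hN.eigenvalues i} :=
  hN.eigenvectorBasis.finrank_le_card_pos_of_forall_sum_pos _ V fun x hx hx0 => by
    simpa only [hN.re_dotProduct_mulVec_eq_sum] using hV x hx hx0

theorem exists_posDefOn_finrank_eq_card_pos_eigenvalues (hN : N.IsHermitian) :
    ∃ V, N.PosDefOn V ∧ finrank 𝕜 V = #{i | 0 < hN.eigenvalues i} := by
  obtain ⟨V, hVrank, hV⟩ :=
    hN.eigenvectorBasis.exists_finrank_eq_card_pos_forall_sum_pos hN.eigenvalues
  refine ⟨V, fun x hx hx0 => ?_, hVrank⟩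
  simpa only [hN.re_dotProduct_mulVec_eq_sum] using hV x hx hx0

theorem posDefOn_neg_iff (hN : N.IsHermitian) (V : Submodule 𝕜 (EuclideanSpace 𝕜 ι)) :
    (-N).PosDefOn V ↔ ∀ x ∈ V, x ≠ 0 →
      0 < ∑ i, -hN.eigenvalues i * ‖⟪hN.eigenvectorBasis i, x⟫_𝕜‖ ^ 2 := by
  simp only [PosDefOn, neg_mulVec, dotProduct_neg, map_neg, hN.re_dotProduct_mulVec_eq_sum,
    neg_mul, Finset.sum_neg_distrib]

theorem card_pos_eigenvalues_of_eq_neg {N' : Matrix ι ι 𝕜} (hN : N.IsHermitian)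
    (hN' : N'.IsHermitian) (h : N' = -N) :
    #{i | 0 < hN'.eigenvalues i} = #{i | hN.eigenvalues i < 0} := by
  subst h
  have hcard : #{i | 0 < -hN.eigenvalues i} = #{i | hN.eigenvalues i < 0} := by
    simp only [Left.neg_pos_iff]
  apply le_antisymm
  · obtain ⟨V, hV, hVrank⟩ := hN'.exists_posDefOn_finrank_eq_card_pos_eigenvalues
    rw [← hVrank, ← hcard]
    exact hN.eigenvectorBasis.finrank_le_card_pos_of_forall_sum_pos _ V
      ((hN.posDefOn_neg_iff V).1 hV)
  · obtain ⟨V, hVrank, hV⟩ :=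
      hN.eigenvectorBasis.exists_finrank_eq_card_pos_forall_sum_pos (fun i => -hN.eigenvalues i)
    rw [← hcard, ← hVrank]
    exact hN'.finrank_le_card_pos_eigenvalues ((hN.posDefOn_neg_iff V).2 hV)

theorem card_pos_add_card_neg_eigenvalues (hN : N.IsHermitian) (hU : IsUnit N) :
    #{i | 0 < hN.eigenvalues i} + #{i | hN.eigenvalues i < 0} = Fintype.card ι := by
  have hne : ∀ i, hN.eigenvalues i ≠ 0 := by
    have := ((isUnit_iff_isUnit_det N).1 hU).ne_zero
    simpa [hN.det_eq_prod_eigenvalues, Finset.prod_ne_zero_iff] using this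
  have hneg : #{i | hN.eigenvalues i < 0} = #{i | ¬0 < hN.eigenvalues i} := by
    congr 1
    exact Finset.filter_congr fun i _ => by rw [not_lt, (hne i).le_iff_lt]
  rw [hneg, Finset.card_filter_add_card_filter_not, Finset.card_univ]

theorem eventually_card_pos_eigenvalues_le {N₀ : Matrix ι ι 𝕜} (hN₀ : N₀.IsHermitian) :
    ∀ᶠ N in 𝓝 N₀, ∀ hN : N.IsHermitian,
      #{i | 0 < hN₀.eigenvalues i} ≤ #{i | 0 < hN.eigenvalues i} := by
  obtain ⟨V, hV, hVrank⟩ := hN₀.exists_posDefOn_finrank_eq_card_pos_eigenvalues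
  filter_upwards [hV.eventually_nhds] with N hNV hN
  exact hVrank ▸ hN.finrank_le_card_pos_eigenvalues hNV

end IsHermitian

end Matrix

theorem IsPreconnected.apply_eq_of_add_eq_of_eventually_le {X : Type*} [TopologicalSpace X]
    {S : Set X} (hS : IsPreconnected S) {f g : X → ℕ} {c : ℕ} (hfg : ∀ x ∈ S, f x + g x = c)
    (hf : ∀ x ∈ S, ∀ᶠ y in 𝓝 x, f x ≤ f y) (hg : ∀ x ∈ S, ∀ᶠ y in 𝓝 x, g x ≤ g y)
    {x y : X} (hx : x ∈ S) (hy : y ∈ S) : f x = f y := by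
  refine hS.constant (fun x hx => ?_) hx hy
  rw [ContinuousWithinAt, nhds_discrete, Filter.tendsto_pure]
  filter_upwards [nhdsWithin_le_nhds (hf x hx), nhdsWithin_le_nhds (hg x hx),
    self_mem_nhdsWithin] with y hfy hgy hy
  have := hfg x hx
  have := hfg y hy
  omega

theorem number_of_positive_eigenvalues_eq_number_of_negative_and_even_general
    {n m : ℕ} (hn : 2 ≤ n)
    (A : Fin n → Matrix (Fin m) (Fin m) ℂ)
    (hHerm : ∀ α, (A α).IsHermitian)
    (hell : ∀ p : Fin n → ℝ, p ≠ 0 → IsUnit (∑ α, (p α : ℂ) • A α)) :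
    (∀ p : Fin n → ℝ, p ≠ 0 → ∀ hp : (∑ α, (p α : ℂ) • A α).IsHermitian,
      (Finset.univ.filter fun i => 0 < hp.eigenvalues i).card =
        (Finset.univ.filter fun i => hp.eigenvalues i < 0).card) ∧
    Even m := by
  have herm (p : Fin n → ℝ) : (∑ α, (p α : ℂ) • A α).IsHermitian :=
    isSelfAdjoint_sum _ fun α _ => IsSelfAdjoint.smul (Complex.conj_ofReal _) (hHerm α)
  set f : (Fin n → ℝ) → ℕ := fun p => #{i | 0 < (herm p).eigenvalues i}
  have hneg (p : Fin n → ℝ) : f (-p) = #{i | (herm p).eigenvalues i < 0} :=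
    (herm p).card_pos_eigenvalues_of_eq_neg (herm (-p)) (by simp [Finset.sum_neg_distrib])
  have hsum (p : Fin n → ℝ) (hp : p ≠ 0) : f p + f (-p) = m := by
    simpa [hneg] using (herm p).card_pos_add_card_neg_eigenvalues (hell p hp)
  have hcont : Continuous fun p : Fin n → ℝ => ∑ α, (p α : ℂ) • A α := by fun_prop
  have hlsc (p : Fin n → ℝ) : ∀ᶠ q in 𝓝 p, f p ≤ f q :=
    ((hcont.tendsto p).eventually
      (herm p).eventually_card_pos_eigenvalues_le).mono fun q hq => hq (herm q)
  have hconn : IsPreconnected ({0}ᶜ : Set (Fin n → ℝ)) :=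
    (isConnected_compl_singleton_of_one_lt_rank (by simp; omega) 0).isPreconnected
  have hsym (p : Fin n → ℝ) (hp : p ≠ 0) : f p = f (-p) :=
    hconn.apply_eq_of_add_eq_of_eventually_le (g := fun p => f (-p)) hsum (fun q _ => hlsc q)
      (fun q _ => (continuous_neg.tendsto q).eventually (hlsc (-q))) hp (neg_ne_zero.2 hp)
  refine ⟨fun p hp _ => hneg p ▸ hsym p hp, f 1, ?_⟩
  have : Nonempty (Fin n) := ⟨⟨0, by omega⟩⟩
  have h1 := hsum 1 one_ne_zero
  rw [← hsym 1 one_ne_zero] at h1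
  exact h1.symm

/-- For an elliptic family of Hermitian matrices `A₁, …, Aₙ` (`n ≥ 2`),
the Hermitian matrix `A(p) = p₁A₁ + ⋯ + pₙAₙ` has, for every `p ≠ 0`, as many positive
eigenvalues as negative ones (counted with multiplicity); in particular `m` is even. -/
theorem number_of_positive_eigenvalues_eq_number_of_negative_and_even
    {n m : ℕ} (hn : 2 ≤ n) (hm : 1 ≤ m)
    (A : Fin n → Matrix (Fin m) (Fin m) ℂ)
    (hHerm : ∀ α, (A α).IsHermitian)
    (hell : ∀ p : Fin n → ℝ, p ≠ 0 → IsUnit (∑ α, (p α : ℂ) • A α)) :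
    (∀ p : Fin n → ℝ, p ≠ 0 → ∀ hp : (∑ α, (p α : ℂ) • A α).IsHermitian,
      (Finset.univ.filter fun i => 0 < hp.eigenvalues i).card =
        (Finset.univ.filter fun i => hp.eigenvalues i < 0).card) ∧
    Even m :=
  number_of_positive_eigenvalues_eq_number_of_negative_and_even_general hn A hHerm hell
end

section
/- Let n ≥ 1 and let A₁, …, Aₙ be 2×2 Hermitian complex matrices with zero trace such that A(p) := p₁A₁ + ⋯ + pₙAₙ is invertible for every p ∈ ℝⁿ \ {0}. Then the function q(p) := −det A(p) is a real-valued quadratic form in p (i.e. there is a real symmetric n×n matrix G = (g^{αβ}) with q(p) = Σ_{α,β} g^{αβ} p_α p_β), and this quadratic form is positive definite. -/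
/-!
For a trace-free `2×2` matrix `M`, Cayley–Hamilton gives `M² = -(det M) • 1`, so
`-det M = tr(M²)/2`. Applied to `M = A(p)` this expands to the quadratic form with coefficients
`g^{αβ} = Re tr(A_α A_β)/2`, which is real because the `A_α` are Hermitian. For Hermitian `M`,
`tr(M²) = tr(Mᴴ M) = ∑ |M_ij|² ≥ 0`, and ellipticity rules out the value `0` when `p ≠ 0`.
-/

open Matrix

namespace Matrix

theorem neg_det_fin_two_of_trace_eq_zero {K : Type*} [Field K] [NeZero (2 : K)]
    {M : Matrix (Fin 2) (Fin 2) K} (htr : M.trace = 0) : -M.det = (M * M).trace / 2 := by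
  rw [eq_div_iff two_ne_zero]
  simp only [det_fin_two, trace_fin_two, mul_apply, Fin.sum_univ_two] at htr ⊢
  linear_combination (-(M 0 0 + M 1 1)) * htr

theorem trace_sum_smul_mul_sum_smul {ι m R : Type*} [Fintype ι] [Fintype m] [CommRing R]
    (c : ι → R) (A : ι → Matrix m m R) :
    ((∑ α, c α • A α) * ∑ β, c β • A β).trace = ∑ α, ∑ β, c α * c β * (A α * A β).trace := by
  simp only [Finset.sum_mul_sum, trace_sum, smul_mul_smul_comm, trace_smul, smul_eq_mul]

theorem isHermitian_sum_ofReal_smul {ι m 𝕜 : Type*} [Fintype ι] [RCLike 𝕜]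
    {A : ι → Matrix m m 𝕜} (hA : ∀ α, (A α).IsHermitian) (p : ι → ℝ) :
    (∑ α, (p α : 𝕜) • A α).IsHermitian :=
  isSelfAdjoint_sum _ fun α _ => (hA α).smul (RCLike.conj_ofReal (p α))

theorem IsHermitian.isSelfAdjoint_trace_mul {m R : Type*} [Fintype m] [CommSemiring R]
    [StarRing R] {A B : Matrix m m R} (hA : A.IsHermitian) (hB : B.IsHermitian) :
    IsSelfAdjoint (A * B).trace := by
  rw [IsSelfAdjoint, ← trace_conjTranspose, conjTranspose_mul, hA.eq, hB.eq, trace_mul_comm]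

open scoped ComplexOrder in
theorem IsHermitian.re_trace_mul_self_nonneg {m 𝕜 : Type*} [Fintype m] [RCLike 𝕜]
    {A : Matrix m m 𝕜} (hA : A.IsHermitian) : 0 ≤ RCLike.re (A * A).trace := by
  have := (posSemidef_conjTranspose_mul_self A).trace_nonneg
  rw [hA.eq] at this
  exact (RCLike.nonneg_iff.mp this).1

end Matrix

theorem neg_det_is_positive_definite_quadratic_form_general
    {n : ℕ} (A : Fin n → Matrix (Fin 2) (Fin 2) ℂ)
    (hHerm : ∀ α, (A α).IsHermitian) (hTr : ∀ α, (A α).trace = 0)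
    (hell : ∀ p : Fin n → ℝ, p ≠ 0 → IsUnit (∑ α, (p α : ℂ) • A α)) :
    ∃ G : Matrix (Fin n) (Fin n) ℝ, G.IsSymm ∧
      (∀ p : Fin n → ℝ,
        -(∑ α, (p α : ℂ) • A α).det = ((∑ α, ∑ β, G α β * p α * p β : ℝ) : ℂ)) ∧
      (∀ p : Fin n → ℝ, p ≠ 0 → 0 < ∑ α, ∑ β, G α β * p α * p β) := by
  let G : Matrix (Fin n) (Fin n) ℝ := fun α β => (A α * A β).trace.re / 2
  have hG : G.IsSymm := IsSymm.ext fun α β => by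
    show (A β * A α).trace.re / 2 = (A α * A β).trace.re / 2
    rw [trace_mul_comm]
  have hq : ∀ p : Fin n → ℝ, ∑ α, ∑ β, G α β * p α * p β =
      ((∑ α, (p α : ℂ) • A α) * ∑ β, (p β : ℂ) • A β).trace.re / 2 := by
    intro p
    simp only [trace_sum_smul_mul_sum_smul, Complex.re_sum, Finset.sum_div]
    refine Finset.sum_congr rfl fun α _ => Finset.sum_congr rfl fun β _ => ?_
    rw [← Complex.ofReal_mul, Complex.re_ofReal_mul]
    ring
  have hdet : ∀ p : Fin n → ℝ,
      -(∑ α, (p α : ℂ) • A α).det = ((∑ α, ∑ β, G α β * p α * p β : ℝ) : ℂ) := fun p => by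
    have hM : (∑ α, (p α : ℂ) • A α).IsHermitian := isHermitian_sum_ofReal_smul hHerm p
    rw [neg_det_fin_two_of_trace_eq_zero (by simp [trace_sum, hTr]), hq, Complex.ofReal_div,
      Complex.conj_eq_iff_re.mp (hM.isSelfAdjoint_trace_mul hM)]
    norm_num
  refine ⟨G, hG, hdet, fun p hp => lt_of_le_of_ne ?_ fun h0 => ?_⟩
  · rw [hq]
    exact div_nonneg (isHermitian_sum_ofReal_smul hHerm p).re_trace_mul_self_nonneg two_pos.le
  · have hdet0 := hdet p
    rw [← h0, Complex.ofReal_zero, neg_eq_zero] at hdet0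
    exact ((isUnit_iff_isUnit_det _).mp (hell p hp)).ne_zero hdet0

/-- For an elliptic family of trace-free Hermitian `2×2` matrices
`A₁, …, Aₙ`, the function `q(p) = -det A(p)` is a real quadratic form in `p`, and this
quadratic form is positive definite. -/
theorem neg_det_is_positive_definite_quadratic_form
    {n : ℕ} (hn : 1 ≤ n) (A : Fin n → Matrix (Fin 2) (Fin 2) ℂ)
    (hHerm : ∀ α, (A α).IsHermitian) (hTr : ∀ α, (A α).trace = 0)
    (hell : ∀ p : Fin n → ℝ, p ≠ 0 → IsUnit (∑ α, (p α : ℂ) • A α)) :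
    ∃ G : Matrix (Fin n) (Fin n) ℝ, G.IsSymm ∧
      (∀ p : Fin n → ℝ,
        -(∑ α, (p α : ℂ) • A α).det = ((∑ α, ∑ β, G α β * p α * p β : ℝ) : ℂ)) ∧
      (∀ p : Fin n → ℝ, p ≠ 0 → 0 < ∑ α, ∑ β, G α β * p α * p β) :=
  neg_det_is_positive_definite_quadratic_form_general A hHerm hTr hell
end

section
/- Let A₁, …, Aₙ be 2×2 Hermitian complex matrices with zero trace such that A(p) := p₁A₁ + ⋯ + pₙAₙ is invertible for every p ∈ ℝⁿ \ {0}. Then n ≤ 3. -/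
open Matrix

namespace Matrix

/-- A trace-free Hermitian `2×2` matrix is `!![a, z; conj z, -a]` with `a` real, so it is
determined by `(a, re z, im z)`: ellipticity makes `p ↦ A(p)` an injective map into a space of
real dimension three. -/
noncomputable def traceFreeHermitianCoords : Matrix (Fin 2) (Fin 2) ℂ →ₗ[ℝ] Fin 3 → ℝ :=
  LinearMap.pi ![Complex.reLm ∘ₗ entryLinearMap ℝ ℂ 0 0, Complex.reLm ∘ₗ entryLinearMap ℝ ℂ 0 1,
    Complex.imLm ∘ₗ entryLinearMap ℝ ℂ 0 1]

theorem IsHermitian.eq_zero_of_traceFreeHermitianCoords_eq_zero {X : Matrix (Fin 2) (Fin 2) ℂ}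
    (hX : X.IsHermitian) (htr : X.trace = 0) (h : traceFreeHermitianCoords X = 0) : X = 0 := by
  have hre00 : (X 0 0).re = 0 := by simpa [traceFreeHermitianCoords] using congrFun h 0
  have hre01 : (X 0 1).re = 0 := by simpa [traceFreeHermitianCoords] using congrFun h 1
  have him01 : (X 0 1).im = 0 := by simpa [traceFreeHermitianCoords] using congrFun h 2
  have him00 : (X 0 0).im = 0 := Complex.conj_eq_iff_im.mp (hX.apply 0 0)
  have h00 : X 0 0 = 0 := Complex.ext hre00 him00
  have h01 : X 0 1 = 0 := Complex.ext hre01 him01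
  have h10 : X 1 0 = 0 := by rw [← hX.apply 1 0, h01, star_zero]
  have h11 : X 1 1 = 0 := by rwa [trace_fin_two, h00, zero_add] at htr
  ext i j
  fin_cases i <;> fin_cases j <;> assumption

end Matrix

/-- If `A₁, …, Aₙ` are trace-free Hermitian `2×2` matrices such that
`A(p) = p₁A₁ + ⋯ + pₙAₙ` is invertible for all `p ≠ 0`, then `n ≤ 3`. -/
theorem dimension_le_three_of_elliptic_trace_free
    {n : ℕ} (A : Fin n → Matrix (Fin 2) (Fin 2) ℂ)
    (hHerm : ∀ α, (A α).IsHermitian) (hTr : ∀ α, (A α).trace = 0)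
    (hell : ∀ p : Fin n → ℝ, p ≠ 0 → IsUnit (∑ α, (p α : ℂ) • A α)) :
    n ≤ 3 := by
  set L := traceFreeHermitianCoords ∘ₗ Fintype.linearCombination ℝ A
  have hker : ∀ p, L p = 0 → p = 0 := by
    intro p hp
    by_contra hp0
    have hsum : ∑ α, (p α : ℂ) • A α = ∑ α, p α • A α := by simp only [Complex.coe_smul]
    have hsumHerm : (∑ α, p α • A α).IsHermitian :=
      isSelfAdjoint_sum _ fun α _ => (IsSelfAdjoint.all (p α)).smul (hHerm α).isSelfAdjoint
    have hsumTr : (∑ α, p α • A α).trace = 0 := by simp [trace_sum, trace_smul, hTr]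
    have hunit := hell p hp0
    rw [hsum, hsumHerm.eq_zero_of_traceFreeHermitianCoords_eq_zero hsumTr
      (by simpa [L, Fintype.linearCombination_apply] using hp)] at hunit
    exact not_isUnit_zero hunit
  simpa using LinearMap.finrank_le_finrank_of_injective ((injective_iff_map_eq_zero L).2 hker)
end

section
/- Let A₁, A₂, A₃ be 2×2 Hermitian complex matrices with zero trace such that A(p) := p₁A₁ + p₂A₂ + p₃A₃ is invertible for every p ∈ ℝ³ \ {0}. Let G = (g^{αβ}) be the (positive definite, real symmetric) Gram matrix of the quadratic form q(p) := −det A(p), and let (g_{αβ}) := G⁻¹. Then the number c := −(i/2)·√(det(g_{αβ}))·tr(A₁A₂A₃) is a real number and c = 1 or c = −1; equivalently, (tr(A₁A₂A₃))² = −4·det G. -/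
open Matrix Complex

/-!
Every trace-free Hermitian `2 × 2` matrix is `σ·v = v₁σ₁ + v₂σ₂ + v₃σ₃` for a real vector `v`,
where `σᵢ` are the Pauli matrices. Writing `A α = σ·(M α)` for a real `3 × 3` matrix `M`, one has
`-det (σ·v) = |v|²`, so `q(p) = |Mᵀp|²` and `G = M Mᵀ`; and `tr (σ·u σ·v σ·w) = 2i det (u, v, w)`,
so `tr (A₁A₂A₃) = 2i det M`. Hence `det G = (det M)²`, `√(det G⁻¹) = 1 / |det M|` and
`c = det M / |det M| = ±1`.
-/

lemma Matrix.IsSymm.ext_of_dotProduct_mulVec_self {n R : Type*} [Fintype n] [DecidableEq n]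
    [CommRing R] [NoZeroDivisors R] [CharZero R] {A B : Matrix n n R}
    (hA : A.IsSymm) (hB : B.IsSymm) (h : ∀ v, v ⬝ᵥ A *ᵥ v = v ⬝ᵥ B *ᵥ v) : A = B := by
  have hform : ∀ M : Matrix n n R, ∀ i j,
      (Pi.single i 1 + Pi.single j 1) ⬝ᵥ M *ᵥ (Pi.single i 1 + Pi.single j 1 : n → R)
        = M i i + M i j + M j i + M j j := by
    intro M i j
    simp only [mulVec_add, dotProduct_add, add_dotProduct, mulVec_single_one, single_one_dotProduct,
      col_apply]
    ring
  ext i j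
  have hdiag : ∀ k, A k k = B k k := fun k => by
    simpa [mulVec_single_one] using h (Pi.single k 1)
  have hij := h (Pi.single i 1 + Pi.single j 1)
  rw [hform, hform, hdiag i, hdiag j, hA.apply i j, hB.apply i j] at hij
  have htwice : (2 : R) * (A i j - B i j) = 0 := by linear_combination hij
  simpa [sub_eq_zero] using htwice

lemma Matrix.sum_sum_mul_mul_eq_dotProduct_mulVec {n R : Type*} [Fintype n] [CommSemiring R]
    (G : Matrix n n R) (p : n → R) : ∑ α, ∑ β, G α β * p α * p β = p ⬝ᵥ G *ᵥ p := by
  simp only [dotProduct, mulVec, Finset.mul_sum]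
  exact Finset.sum_congr rfl fun _ _ => Finset.sum_congr rfl fun _ _ => by ring

/-- `v₁σ₁ + v₂σ₂ + v₃σ₃`, with `σᵢ` the Pauli matrices. -/
def pauliDot : (Fin 3 → ℝ) →ₗ[ℝ] Matrix (Fin 2) (Fin 2) ℂ where
  toFun v := !![(v 2 : ℂ), v 0 - v 1 * I; v 0 + v 1 * I, -(v 2 : ℂ)]
  map_add' u v := by ext i j; fin_cases i <;> fin_cases j <;> simp <;> ring
  map_smul' c v := by ext i j; fin_cases i <;> fin_cases j <;> simp <;> ring

lemma pauliDot_apply (v : Fin 3 → ℝ) :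
    pauliDot v = !![(v 2 : ℂ), v 0 - v 1 * I; v 0 + v 1 * I, -(v 2 : ℂ)] := rfl

lemma exists_pauliDot_eq {A : Matrix (Fin 2) (Fin 2) ℂ} (hA : A.IsHermitian) (htr : A.trace = 0) :
    ∃ v, pauliDot v = A := by
  have h00 : (A 0 0).im = 0 := conj_eq_iff_im.mp (hA.apply 0 0)
  have h10 : A 1 0 = star (A 0 1) := (hA.apply 1 0).symm
  have h11 : A 1 1 = -A 0 0 := eq_neg_of_add_eq_zero_right (by rwa [trace_fin_two] at htr)
  refine ⟨![(A 0 1).re, -(A 0 1).im, (A 0 0).re], ?_⟩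
  rw [eta_fin_two A, h10, h11, pauliDot_apply]
  ext i j; fin_cases i <;> fin_cases j <;> simp [Complex.ext_iff, h00]

lemma det_pauliDot (v : Fin 3 → ℝ) : (pauliDot v).det = -((v ⬝ᵥ v : ℝ) : ℂ) := by
  rw [pauliDot_apply, det_fin_two_of, dotProduct, Fin.sum_univ_three]
  push_cast
  linear_combination ((v 1 : ℂ) ^ 2) * I_sq

lemma trace_pauliDot_mul_mul (M : Matrix (Fin 3) (Fin 3) ℝ) :
    (pauliDot (M 0) * pauliDot (M 1) * pauliDot (M 2)).trace = 2 * I * M.det := by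
  simp only [pauliDot_apply, det_fin_three, trace_fin_two, Matrix.mul_apply, Fin.sum_univ_two,
    of_apply, cons_val', cons_val_zero, cons_val_one, cons_val_fin_one, ofReal_sub, ofReal_add,
    ofReal_mul]
  ring_nf

lemma sum_smul_pauliDot {ι : Type*} [Fintype ι] (p : ι → ℝ) (M : Matrix ι (Fin 3) ℝ) :
    ∑ α, (p α : ℂ) • pauliDot (M α) = pauliDot (p ᵥ* M) := by
  simp [vecMul_eq_sum, map_sum, map_smul, Complex.coe_smul]

lemma neg_det_sum_smul_pauliDot {ι : Type*} [Fintype ι] (p : ι → ℝ) (M : Matrix ι (Fin 3) ℝ) :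
    -(∑ α, (p α : ℂ) • pauliDot (M α)).det = ((p ⬝ᵥ (M * Mᵀ) *ᵥ p : ℝ) : ℂ) := by
  rw [sum_smul_pauliDot, det_pauliDot, neg_neg, ← mulVec_mulVec, dotProduct_mulVec, mulVec_transpose]

lemma charge_eq_one_or_neg_one {m : ℝ} (hm : m ≠ 0) :
    -(I / 2) * (√((m ^ 2)⁻¹) : ℂ) * (2 * I * m) = 1 ∨
      -(I / 2) * (√((m ^ 2)⁻¹) : ℂ) * (2 * I * m) = -1 := by
  have h : -(I / 2) * (√((m ^ 2)⁻¹) : ℂ) * (2 * I * m) = ((m / |m| : ℝ) : ℂ) := by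
    rw [Real.sqrt_inv, Real.sqrt_sq_eq_abs]
    push_cast
    linear_combination (-(m : ℂ) / ((|m| : ℝ) : ℂ)) * I_sq
  rw [h]
  rcases abs_choice m with habs | habs <;> simp [habs, hm]

theorem topological_charge_is_plus_minus_one_general
    (A : Fin 3 → Matrix (Fin 2) (Fin 2) ℂ)
    (hHerm : ∀ α, (A α).IsHermitian) (hTr : ∀ α, (A α).trace = 0)
    (G : Matrix (Fin 3) (Fin 3) ℝ) (hGpos : G.PosDef)
    (hG : ∀ p : Fin 3 → ℝ,
      -(∑ α, (p α : ℂ) • A α).det = ((∑ α, ∑ β, G α β * p α * p β : ℝ) : ℂ)) :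
    (-(Complex.I / 2) * (Real.sqrt (G⁻¹).det : ℂ) * (A 0 * A 1 * A 2).trace = 1 ∨
      -(Complex.I / 2) * (Real.sqrt (G⁻¹).det : ℂ) * (A 0 * A 1 * A 2).trace = -1) ∧
    ((A 0 * A 1 * A 2).trace) ^ 2 = -4 * (G.det : ℂ) := by
  obtain ⟨M, hM⟩ : ∃ M : Matrix (Fin 3) (Fin 3) ℝ, ∀ α, pauliDot (M α) = A α :=
    Classical.axiomOfChoice fun α => exists_pauliDot_eq (hHerm α) (hTr α)
  have hGM : G = M * Mᵀ := by
    refine (isHermitian_iff_isSymm.mp hGpos.isHermitian).ext_of_dotProduct_mulVec_self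
      (isSymm_mul_transpose_self M) fun p => ?_
    have h := hG p
    simp only [← hM, neg_det_sum_smul_pauliDot, sum_sum_mul_mul_eq_dotProduct_mulVec] at h
    exact_mod_cast h.symm
  have hdetG : G.det = M.det ^ 2 := by rw [hGM, det_mul, det_transpose, sq]
  have hdetM : M.det ≠ 0 := fun h => by simpa [hdetG, h] using hGpos.det_pos
  have htrace : (A 0 * A 1 * A 2).trace = 2 * I * M.det := by
    rw [← hM 0, ← hM 1, ← hM 2, trace_pauliDot_mul_mul]
  refine ⟨?_, ?_⟩
  · rw [htrace, det_nonsing_inv, Ring.inverse_eq_inv', hdetG]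
    exact charge_eq_one_or_neg_one hdetM
  · rw [htrace, hdetG]
    push_cast
    linear_combination (4 * (M.det : ℂ) ^ 2) * I_sq

/-- **topological charge.** For an elliptic trace-free Hermitian `2×2`
pencil in dimension 3 with Gram matrix `G` of the quadratic form `q(p) = -det A(p)`
(so `(g_{αβ}) = G⁻¹`), the topological charge
`c = -(i/2)·√(det G⁻¹)·tr(A₁A₂A₃)` equals `+1` or `-1`; equivalently
`(tr(A₁A₂A₃))² = -4·det G`. -/
theorem topological_charge_is_plus_minus_one
    (A : Fin 3 → Matrix (Fin 2) (Fin 2) ℂ)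
    (hHerm : ∀ α, (A α).IsHermitian) (hTr : ∀ α, (A α).trace = 0)
    (hell : ∀ p : Fin 3 → ℝ, p ≠ 0 → IsUnit (∑ α, (p α : ℂ) • A α))
    (G : Matrix (Fin 3) (Fin 3) ℝ) (hGsymm : G.IsSymm) (hGpos : G.PosDef)
    (hG : ∀ p : Fin 3 → ℝ,
      -(∑ α, (p α : ℂ) • A α).det = ((∑ α, ∑ β, G α β * p α * p β : ℝ) : ℂ)) :
    (-(Complex.I / 2) * (Real.sqrt (G⁻¹).det : ℂ) * (A 0 * A 1 * A 2).trace = 1 ∨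
      -(Complex.I / 2) * (Real.sqrt (G⁻¹).det : ℂ) * (A 0 * A 1 * A 2).trace = -1) ∧
    ((A 0 * A 1 * A 2).trace) ^ 2 = -4 * (G.det : ℂ) :=
  topological_charge_is_plus_minus_one_general A hHerm hTr G hGpos hG
end

section
/- Let V be a complex vector space, let T : V → V be a ℂ-linear map, and let C : V → V be an additive map which is conjugate-linear (C(z·v) = z̄·C(v) for all z ∈ ℂ, v ∈ V) and satisfies C(C(v)) = −v for all v ∈ V and T(C(v)) = C(T(v)) for all v ∈ V. Then for every real number μ, if the eigenspace {v ∈ V : T(v) = μ·v} is finite-dimensional, its complex dimension is even. -/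
/-!
An antilinear `C` with `C ∘ C = -1` has no eigenvector: `C v = a • v` would give
`-v = C (C v) = |a|² • v`. Hence every `v ≠ 0` spans together with `C v` a `C`-stable plane,
and `C` descends to the quotient by that plane, so the dimension drops by two at each step.
Since `T` commutes with `C`, the map `C` carries the `μ`-eigenspace of `T` to the
`conj μ`-eigenspace, which is the same space when `μ` is real.
-/

universe u

open Module Submodule

section Antilinear

variable {W : Type u} [AddCommGroup W] [Module ℂ W]

theorem linearIndependent_pair_of_antilinear_sq_eq_neg (C : W →ₗ⋆[ℂ] W)
    (hCC : ∀ v, C (C v) = -v) {v : W} (hv : v ≠ 0) : LinearIndependent ℂ ![v, C v] := by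
  rw [LinearIndependent.pair_iff' hv]
  intro a ha
  have hsq : ((Complex.normSq a : ℂ) + 1) • v = 0 := by
    have h := hCC v
    rw [← ha, C.map_smulₛₗ, ← ha, smul_smul, ← Complex.normSq_eq_conj_mul_self] at h
    rw [add_smul, one_smul, h, neg_add_cancel]
  refine (smul_eq_zero.mp hsq).elim (fun h => ?_) (hv ·)
  have : Complex.normSq a + 1 = 0 := by exact_mod_cast h
  linarith [Complex.normSq_nonneg a]

theorem span_pair_le_comap_of_antilinear_sq_eq_neg (C : W →ₗ⋆[ℂ] W)
    (hCC : ∀ v, C (C v) = -v) (v : W) :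
    span ℂ (Set.range ![v, C v]) ≤ (span ℂ (Set.range ![v, C v])).comap C := by
  rw [span_le, Set.range_subset_iff, Fin.forall_fin_two]
  refine ⟨subset_span ⟨1, rfl⟩, ?_⟩
  simpa [hCC] using subset_span (R := ℂ) (s := Set.range ![v, C v]) ⟨0, rfl⟩

theorem mapQ_mapQ_of_sq_eq_neg (C : W →ₗ⋆[ℂ] W) (hCC : ∀ v, C (C v) = -v)
    {p : Submodule ℂ W} (hp : p ≤ p.comap C) (q : W ⧸ p) :
    p.mapQ p C hp (p.mapQ p C hp q) = -q :=
  Quotient.induction_on p q fun v => by simp [hCC]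

theorem even_finrank_of_antilinear_sq_eq_neg (C : W →ₗ⋆[ℂ] W) (hCC : ∀ v, C (C v) = -v) :
    Even (finrank ℂ W) := by
  induction h : finrank ℂ W using Nat.strong_induction_on generalizing W with
  | _ n ih =>
    obtain rfl | hpos := Nat.eq_zero_or_pos n
    · exact .zero
    have : FiniteDimensional ℂ W := finite_of_finrank_pos (h ▸ hpos)
    have : Nontrivial W := finrank_pos_iff.mp (h ▸ hpos)
    obtain ⟨v, hv⟩ := exists_ne (0 : W)
    set P := span ℂ (Set.range ![v, C v])
    have hP : finrank ℂ P = 2 := by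
      simpa using finrank_span_eq_card (linearIndependent_pair_of_antilinear_sq_eq_neg C hCC hv)
    have hsum := finrank_quotient_add_finrank P
    have hPC := span_pair_le_comap_of_antilinear_sq_eq_neg C hCC v
    obtain ⟨k, hk⟩ := ih (finrank ℂ (W ⧸ P)) (by omega) (P.mapQ P C hPC)
      (mapQ_mapQ_of_sq_eq_neg C hCC hPC) rfl
    exact ⟨k + 1, by omega⟩

end Antilinear

theorem antilinear_mem_eigenspace_conj {V : Type*} [AddCommGroup V] [Module ℂ V]
    {T : V →ₗ[ℂ] V} {C : V →ₗ⋆[ℂ] V} (hTC : ∀ v, T (C v) = C (T v)) {μ : ℂ} {v : V}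
    (hv : v ∈ End.eigenspace T μ) : C v ∈ End.eigenspace T (starRingEnd ℂ μ) := by
  rw [End.mem_eigenspace_iff] at hv ⊢
  rw [hTC, hv, C.map_smulₛₗ]

theorem even_multiplicity_of_real_eigenvalues_general
    {V : Type*} [AddCommGroup V] [Module ℂ V]
    (T : V →ₗ[ℂ] V) (C : V → V)
    (hadd : ∀ u v : V, C (u + v) = C u + C v)
    (hconj : ∀ (z : ℂ) (v : V), C (z • v) = (starRingEnd ℂ z) • C v)
    (hCC : ∀ v : V, C (C v) = -v)
    (hTC : ∀ v : V, T (C v) = C (T v))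
    (μ : ℝ) :
    Even (Module.finrank ℂ (Module.End.eigenspace T (μ : ℂ))) := by
  let C' : V →ₗ⋆[ℂ] V := { toFun := C, map_add' := hadd, map_smul' := hconj }
  have hE : ∀ v ∈ End.eigenspace T (μ : ℂ), C' v ∈ End.eigenspace T (μ : ℂ) := fun v hv => by
    simpa using antilinear_mem_eigenspace_conj (C := C') hTC hv
  exact even_finrank_of_antilinear_sq_eq_neg (C'.restrict hE) fun v => Subtype.ext (hCC v)

/-- If `C` is an antilinear map on a complex vector space satisfying
`C∘C = -id` and commuting with a linear map `T`, then every finite-dimensional eigenspace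
of `T` corresponding to a real eigenvalue has even complex dimension. -/
theorem even_multiplicity_of_real_eigenvalues
    {V : Type*} [AddCommGroup V] [Module ℂ V]
    (T : V →ₗ[ℂ] V) (C : V → V)
    (hadd : ∀ u v : V, C (u + v) = C u + C v)
    (hconj : ∀ (z : ℂ) (v : V), C (z • v) = (starRingEnd ℂ z) • C v)
    (hCC : ∀ v : V, C (C v) = -v)
    (hTC : ∀ v : V, T (C v) = C (T v))
    (μ : ℝ)
    (hfd : FiniteDimensional ℂ (Module.End.eigenspace T (μ : ℂ))) :
    Even (Module.finrank ℂ (Module.End.eigenspace T (μ : ℂ))) :=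
  even_multiplicity_of_real_eigenvalues_general T C hadd hconj hCC hTC μ
end

section
/- Let n ≥ 3 be an integer and let (λ_k)_{k∈ℕ} be a sequence of nonzero real numbers such that for every R > 0 the set {k : |λ_k| ≤ R} is finite. Define N_±(λ) := #{k : 0 < ±λ_k < λ} for λ > 0, and suppose there exist real numbers a, b and a constant C > 0 with |N_±(λ) − a λⁿ ∓ b λ^{n−1}| ≤ C λ^{n−2} for all λ ≥ 1. Then there exists a function F, holomorphic on the half-plane {s ∈ ℂ : Re s > n − 2}, such that for every s with Re s > n one has Σ_k sgn(λ_k)·|λ_k|^{−s} = 2(n−1)b/(s − (n−1)) + F(s). In particular, the eta function extends meromorphically to Re s > n − 2, is holomorphic at s = n, and has at most a simple pole at s = n − 1 with residue 2(n−1)b. -/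
/-!
Since `|x|^{-s} = s ∫_{|x|}^∞ t^{-s-1} dt` for `Re s > 0`, summing over `k` gives
`η(s) = s · 𝓜[N₊ - N₋](-s)`, where `𝓜` is the Mellin transform; the exchange of sum and integral is
justified by the convergence of `𝓜[N₊ + N₋](-s)`, as `N₊ + N₋ = O(tⁿ)`. Near `0` both counting
functions vanish, and at infinity the hypotheses give `N₊ - N₋ = 2b t^{n-1} + O(t^{n-2})`.
Removing `2b t^{n-1}` on `(1, ∞)`, whose Mellin transform at `-s` is `2b / (s - (n-1))`, leaves a
function whose Mellin transform at `-s` is holomorphic for `Re s > n - 2`; finally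
`s / (s - (n-1)) = 1 + (n-1) / (s - (n-1))`.
-/

open Complex Set Filter MeasureTheory Asymptotics Topology

theorem hasMellin_one_Ioi {r : ℝ} (hr : 0 < r) {s : ℂ} (hs : s.re < 0) :
    HasMellin ((Ioi r).indicator fun _ => 1 : ℝ → ℂ) s (-(r : ℂ) ^ s / s) := by
  have hs' : (s - 1).re < -1 := by simp only [sub_re, one_re]; linarith
  have hIoi : (volume.restrict (Ioi (0 : ℝ))).restrict (Ioi r) = volume.restrict (Ioi r) :=
    Measure.restrict_restrict_of_subset (Ioi_subset_Ioi hr.le)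
  simp_rw [HasMellin, mellin, MellinConvergent, ← indicator_smul, IntegrableOn,
    integrable_indicator_iff measurableSet_Ioi, smul_eq_mul, integral_indicator measurableSet_Ioi,
    mul_one, hIoi]
  exact ⟨by rw [IntegrableOn, hIoi]; exact integrableOn_Ioi_cpow_of_lt hs' hr,
    by rw [integral_Ioi_cpow_of_lt hs' hr, sub_add_cancel]⟩

theorem hasMellin_cpow_Ioi (a : ℂ) {r : ℝ} (hr : 0 < r) {s : ℂ} (hs : s.re + a.re < 0) :
    HasMellin ((Ioi r).indicator fun t => (t : ℂ) ^ a) s (-(r : ℂ) ^ (s + a) / (s + a)) := by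
  have := hasMellin_one_Ioi hr (by rwa [add_re] : (s + a).re < 0)
  simp_rw [HasMellin, ← MellinConvergent.cpow_smul, ← mellin_cpow_smul, ← indicator_smul,
    smul_eq_mul, mul_one] at this
  exact this

theorem mellin_tsum {ι E : Type*} [Countable ι] [NormedAddCommGroup E] [NormedSpace ℂ E]
    [CompleteSpace E] {f : ι → ℝ → E} {g : ℝ → ℝ} {s : ℂ}
    (hf : ∀ i, AEStronglyMeasurable (f i) (volume.restrict (Ioi 0)))
    (hfg : ∀ t, HasSum (fun i => ‖f i t‖) (g t)) (hg : MellinConvergent (fun t => (g t : ℂ)) s) :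
    mellin (fun t => ∑' i, f i t) s = ∑' i, mellin (f i) s := by
  have hsmul : ∀ i, AEStronglyMeasurable (fun t : ℝ => (t : ℂ) ^ (s - 1) • f i t)
      (volume.restrict (Ioi 0)) := fun i =>
    (ContinuousOn.aestronglyMeasurable (fun t ht => (continuousAt_ofReal_cpow_const _ _
      (Or.inr (ne_of_gt ht))).continuousWithinAt) measurableSet_Ioi).smul (hf i)
  have htsum_enorm : ∀ t : ℝ,
      ∑' i, ‖(t : ℂ) ^ (s - 1) • f i t‖ₑ = ‖(t : ℂ) ^ (s - 1) • (g t : ℂ)‖ₑ := by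
    intro t
    simp_rw [enorm_smul, ENNReal.tsum_mul_left]
    congr 1
    rw [← (hfg t).tsum_eq, ← ofReal_norm, Complex.norm_real,
      Real.norm_of_nonneg (tsum_nonneg fun i => norm_nonneg _),
      ENNReal.ofReal_tsum_of_nonneg (fun i => norm_nonneg _) (hfg t).summable]
    simp_rw [ofReal_norm]
  have hfin : ∑' i, ∫⁻ t in Ioi (0 : ℝ), ‖(t : ℂ) ^ (s - 1) • f i t‖ₑ ≠ ⊤ := by
    rw [← lintegral_tsum fun i => (hsmul i).enorm]
    simp_rw [htsum_enorm]
    exact hg.hasFiniteIntegral.ne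
  simp_rw [mellin, ← integral_tsum hsmul hfin]
  congr 1
  funext t
  exact ((hfg t).summable.of_norm.tsum_const_smul _).symm

theorem MeasureTheory.LocallyIntegrable.ofReal {X : Type*} [MeasurableSpace X]
    [TopologicalSpace X] {μ : Measure X} {f : X → ℝ} (hf : LocallyIntegrable f μ) :
    LocallyIntegrable (fun x => (f x : ℂ)) μ := fun x =>
  let ⟨U, hU, hfU⟩ := hf x
  ⟨U, hU, hfU.ofReal⟩

section VanishingNearZero

variable {g : ℝ → ℝ} {a : ℝ} {s : ℂ}

theorem mellinConvergent_ofReal_of_isBigO_of_eventuallyEq_zero (hg : LocallyIntegrable g)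
    (htop : g =O[atTop] (· ^ a)) (hzero : g =ᶠ[𝓝 0] 0) (hs : s.re < -a) :
    MellinConvergent (fun t => (g t : ℂ)) s :=
  mellinConvergent_of_isBigO_rpow (b := s.re - 1) (hg.ofReal.locallyIntegrableOn _)
    (by simpa only [neg_neg, isBigO_ofReal_left] using htop) hs
    (isBigO_ofReal_left.2 <|
      (hzero.filter_mono nhdsWithin_le_nhds).trans_isBigO (isBigO_zero _ _)) (by linarith)

theorem mellin_differentiableAt_ofReal_of_isBigO_of_eventuallyEq_zero (hg : LocallyIntegrable g)
    (htop : g =O[atTop] (· ^ a)) (hzero : g =ᶠ[𝓝 0] 0) (hs : s.re < -a) :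
    DifferentiableAt ℂ (mellin fun t => (g t : ℂ)) s :=
  mellin_differentiableAt_of_isBigO_rpow (b := s.re - 1) (hg.ofReal.locallyIntegrableOn _)
    (by simpa only [neg_neg, isBigO_ofReal_left] using htop) hs
    (isBigO_ofReal_left.2 <|
      (hzero.filter_mono nhdsWithin_le_nhds).trans_isBigO (isBigO_zero _ _)) (by linarith)

end VanishingNearZero

theorem Set.Finite.hasSum_indicator_one {α : Type*} {S : Set α} (hS : S.Finite) :
    HasSum (S.indicator 1) (Nat.card S : ℝ) := by
  have hsum : Summable (S.indicator (1 : α → ℝ)) :=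
    summable_of_hasFiniteSupport (hS.subset support_indicator_subset)
  have := hsum.hasSum
  rwa [← tsum_subtype, Pi.one_def, tsum_const, nsmul_one] at this

theorem isBigO_pow_of_abs_le {g : ℝ → ℝ} {C : ℝ} {m : ℕ} (h : ∀ t, 1 ≤ t → |g t| ≤ C * t ^ m) :
    g =O[atTop] (· ^ m) :=
  .of_bound C <| (eventually_ge_atTop 1).mono fun t ht => by
    rw [Real.norm_eq_abs, Real.norm_eq_abs, abs_of_nonneg (pow_nonneg (zero_le_one.trans ht) m)]
    exact h t ht

/-- `N₊(t)`; `N₋(t)` is `posCount (-Λ) t`. -/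
noncomputable def posCount (Λ : ℕ → ℝ) (t : ℝ) : ℕ := Nat.card (Λ ⁻¹' Ioo 0 t)

noncomputable def signedCount (Λ : ℕ → ℝ) (t : ℝ) : ℝ := posCount Λ t - posCount (-Λ) t

noncomputable def absCount (Λ : ℕ → ℝ) (t : ℝ) : ℝ := posCount Λ t + posCount (-Λ) t

noncomputable def signStep (x t : ℝ) : ℝ := (Ioi |x|).indicator (fun _ => Real.sign x) t

/-- The term `c tᵖ` is removed on `(1, ∞)` only, so that the remainder still vanishes near `0`. -/
noncomputable def signedCountRemainder (Λ : ℕ → ℝ) (c : ℝ) (p : ℕ) (t : ℝ) : ℝ :=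
  signedCount Λ t - (Ioi 1).indicator (fun t => c * t ^ p) t

theorem finite_preimage_Ioo {Λ : ℕ → ℝ} (hfin : ∀ R : ℝ, 0 < R → {k : ℕ | |Λ k| ≤ R}.Finite)
    (t : ℝ) : (Λ ⁻¹' Ioo 0 t).Finite :=
  (hfin (max t 1) (by positivity)).subset fun k hk => by
    simpa [abs_of_pos hk.1] using Or.inl hk.2.le

section PosCount

variable {Λ : ℕ → ℝ} (hΛ : ∀ t, (Λ ⁻¹' Ioo 0 t).Finite)
include hΛ

theorem posCount_mono : Monotone (posCount Λ) := fun _ t₂ h =>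
  Nat.card_mono (hΛ t₂) (preimage_mono (Ioo_subset_Ioo_right h))

theorem locallyIntegrable_posCount : LocallyIntegrable (fun t => (posCount Λ t : ℝ)) :=
  (Nat.mono_cast.comp (posCount_mono hΛ)).locallyIntegrable

theorem posCount_eventually_eq_zero : (fun t => (posCount Λ t : ℝ)) =ᶠ[𝓝 0] 0 := by
  have hbelow : ∀ᶠ t in 𝓝 (0 : ℝ), ∀ k ∈ Λ ⁻¹' Ioo 0 1, t < Λ k :=
    (hΛ 1).eventually_all.2 fun k hk => eventually_lt_nhds hk.1
  filter_upwards [hbelow, eventually_lt_nhds one_pos] with t ht ht1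
  have : Λ ⁻¹' Ioo 0 t = ∅ :=
    eq_empty_of_forall_notMem fun k hk => (ht k ⟨hk.1, hk.2.trans ht1⟩).not_gt hk.2
  simp [posCount, this]

theorem hasSum_indicator_Ioo (t : ℝ) :
    HasSum (fun k => (Ioo 0 t).indicator 1 (Λ k)) (posCount Λ t : ℝ) :=
  (hΛ t).hasSum_indicator_one

end PosCount

theorem signStep_eq (x t : ℝ) :
    signStep x t = (Ioo 0 t).indicator 1 x - (Ioo 0 t).indicator 1 (-x) := by
  rcases lt_trichotomy x 0 with hx | rfl | hx
  · simp [signStep, indicator_apply, hx, abs_of_neg, Real.sign_of_neg, hx.not_gt]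
    split_ifs <;> norm_num
  · simp [signStep]
  · simp [signStep, indicator_apply, hx, abs_of_pos, Real.sign_of_pos, hx.not_gt]

theorem abs_signStep (x t : ℝ) :
    |signStep x t| = (Ioo 0 t).indicator 1 x + (Ioo 0 t).indicator 1 (-x) := by
  rcases lt_trichotomy x 0 with hx | rfl | hx
  · simp [signStep, indicator_apply, hx, abs_of_neg, Real.sign_of_neg, hx.not_gt]
    split_ifs <;> norm_num
  · simp [signStep]
  · simp [signStep, indicator_apply, hx, abs_of_pos, Real.sign_of_pos, hx.not_gt]
    split_ifs <;> norm_num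

theorem mellin_signStep (x : ℝ) {s : ℂ} (hs : s.re < 0) :
    mellin (fun t => (signStep x t : ℂ)) s = -Real.sign x * ((|x| : ℝ) : ℂ) ^ s / s := by
  rcases eq_or_ne x 0 with rfl | hx
  · simp [signStep, mellin]
  have hstep : (fun t => (signStep x t : ℂ)) =
      fun t => (Real.sign x : ℂ) • (Ioi |x|).indicator (fun _ => 1) t := by
    funext t
    by_cases h : |x| < t <;> simp [signStep, h]
  have hone := hasMellin_one_Ioi (abs_pos.2 hx) hs
  rw [hstep, (hasMellin_const_smul hone.1 _).2, hone.2, smul_eq_mul]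
  ring

section Asymptotics

variable {Λ : ℕ → ℝ} {a b : ℝ} {n m p : ℕ}
  (hplus : (fun t => (posCount Λ t : ℝ) - a * t ^ n - b * t ^ p) =O[atTop] (· ^ m))
  (hminus : (fun t => (posCount (-Λ) t : ℝ) - a * t ^ n + b * t ^ p) =O[atTop] (· ^ m))
include hplus hminus

theorem isBigO_absCount (hmn : m < n) : absCount Λ =O[atTop] (· ^ n) :=
  (((hplus.add hminus).trans (isLittleO_pow_pow_atTop_of_lt hmn).isBigO).add
    ((isBigO_refl (· ^ n) atTop).const_mul_left (2 * a))).congr_left fun t => by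
      simp only [absCount]; ring

theorem isBigO_signedCountRemainder : signedCountRemainder Λ (2 * b) p =O[atTop] (· ^ m) :=
  (hplus.sub hminus).congr' ((eventually_gt_atTop 1).mono fun t ht => by
    simp only [signedCountRemainder, signedCount, indicator_of_mem (mem_Ioi.2 ht)]; ring) .rfl

end Asymptotics

theorem mellin_signedCount {Λ : ℕ → ℝ} (c : ℝ) (p : ℕ) {s : ℂ}
    (hrem : MellinConvergent (fun t => (signedCountRemainder Λ c p t : ℂ)) s)
    (hs : s.re + p < 0) :
    mellin (fun t => (signedCount Λ t : ℂ)) s =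
      mellin (fun t => (signedCountRemainder Λ c p t : ℂ)) s - c / (s + p) := by
  have hpow := hasMellin_cpow_Ioi (p : ℂ) one_pos (by simpa using hs)
  have hsplit : (fun t => (signedCount Λ t : ℂ)) = fun t => (signedCountRemainder Λ c p t : ℂ) +
      (c : ℂ) • (Ioi (1 : ℝ)).indicator (fun t : ℝ => (t : ℂ) ^ (p : ℂ)) t := by
    funext t
    by_cases ht : t ∈ Ioi 1 <;> simp [signedCountRemainder, ht]
  rw [hsplit, (hasMellin_add hrem (hasMellin_const_smul hpow.1 _).1).2,
    (hasMellin_const_smul hpow.1 _).2, hpow.2]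
  simp only [ofReal_one, one_cpow, smul_eq_mul]
  ring

section SignedCount

variable {Λ : ℕ → ℝ} (hΛ : ∀ t, (Λ ⁻¹' Ioo 0 t).Finite) (hΛ' : ∀ t, ((-Λ) ⁻¹' Ioo 0 t).Finite)
include hΛ hΛ'

theorem hasSum_signStep (t : ℝ) : HasSum (fun k => signStep (Λ k) t) (signedCount Λ t) := by
  simpa only [signStep_eq, signedCount, Pi.neg_apply] using
    (hasSum_indicator_Ioo hΛ t).sub (hasSum_indicator_Ioo hΛ' t)

theorem hasSum_abs_signStep (t : ℝ) : HasSum (fun k => |signStep (Λ k) t|) (absCount Λ t) := by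
  simpa only [abs_signStep, absCount, Pi.neg_apply] using
    (hasSum_indicator_Ioo hΛ t).add (hasSum_indicator_Ioo hΛ' t)

theorem tsum_sign_mul_cpow_eq_mul_mellin {s : ℂ} (hs : 0 < s.re)
    (habs : MellinConvergent (fun t => (absCount Λ t : ℂ)) (-s)) :
    ∑' k, (Real.sign (Λ k) : ℂ) * ((|Λ k| : ℝ) : ℂ) ^ (-s) =
      s * mellin (fun t => (signedCount Λ t : ℂ)) (-s) := by
  have hs0 : s ≠ 0 := fun h => by simp [h] at hs
  have hmeas : ∀ k, AEStronglyMeasurable (fun t => (signStep (Λ k) t : ℂ))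
      (volume.restrict (Ioi 0)) := fun k =>
    (measurable_ofReal.comp (measurable_const.indicator measurableSet_Ioi)).aestronglyMeasurable
  have hnorm : ∀ t, HasSum (fun k => ‖(signStep (Λ k) t : ℂ)‖) (absCount Λ t) := fun t => by
    simpa only [norm_real, Real.norm_eq_abs] using hasSum_abs_signStep hΛ hΛ' t
  have hsum : (fun t => (signedCount Λ t : ℂ)) = fun t => ∑' k, (signStep (Λ k) t : ℂ) := by
    funext t
    rw [← ofReal_tsum, (hasSum_signStep hΛ hΛ' t).tsum_eq]
  calc ∑' k, (Real.sign (Λ k) : ℂ) * ((|Λ k| : ℝ) : ℂ) ^ (-s)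
      = ∑' k, s * mellin (fun t => (signStep (Λ k) t : ℂ)) (-s) := by
        congr 1; funext k
        rw [mellin_signStep _ (by simpa using hs)]
        field_simp
    _ = s * mellin (fun t => (signedCount Λ t : ℂ)) (-s) := by
        rw [tsum_mul_left, hsum, mellin_tsum hmeas hnorm habs]

theorem mellinConvergent_absCount {m : ℕ} (habs : absCount Λ =O[atTop] (· ^ m)) {s : ℂ}
    (hs : s.re < -m) : MellinConvergent (fun t => (absCount Λ t : ℂ)) s :=
  mellinConvergent_ofReal_of_isBigO_of_eventuallyEq_zero
    ((locallyIntegrable_posCount hΛ).add (locallyIntegrable_posCount hΛ'))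
    (by simpa only [Real.rpow_natCast] using habs)
    (by filter_upwards [posCount_eventually_eq_zero hΛ, posCount_eventually_eq_zero hΛ']
          with t h h'
        simp_all [absCount]) hs

theorem locallyIntegrable_signedCountRemainder (c : ℝ) (p : ℕ) :
    LocallyIntegrable (signedCountRemainder Λ c p) :=
  ((locallyIntegrable_posCount hΛ).sub (locallyIntegrable_posCount hΛ')).sub
    ((continuous_const.mul (continuous_pow p)).locallyIntegrable.indicator measurableSet_Ioi)

theorem signedCountRemainder_eventually_eq_zero (c : ℝ) (p : ℕ) :
    signedCountRemainder Λ c p =ᶠ[𝓝 0] 0 := by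
  filter_upwards [posCount_eventually_eq_zero hΛ, posCount_eventually_eq_zero hΛ',
    eventually_le_nhds zero_lt_one] with t h h' ht
  simp_all [signedCountRemainder, signedCount]

theorem mellinConvergent_signedCountRemainder {c : ℝ} {p m : ℕ}
    (hrem : signedCountRemainder Λ c p =O[atTop] (· ^ m)) {s : ℂ} (hs : s.re < -m) :
    MellinConvergent (fun t => (signedCountRemainder Λ c p t : ℂ)) s :=
  mellinConvergent_ofReal_of_isBigO_of_eventuallyEq_zero
    (locallyIntegrable_signedCountRemainder hΛ hΛ' c p)
    (by simpa only [Real.rpow_natCast] using hrem)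
    (signedCountRemainder_eventually_eq_zero hΛ hΛ' c p) hs

theorem mellin_differentiableAt_signedCountRemainder {c : ℝ} {p m : ℕ}
    (hrem : signedCountRemainder Λ c p =O[atTop] (· ^ m)) {s : ℂ} (hs : s.re < -m) :
    DifferentiableAt ℂ (mellin fun t => (signedCountRemainder Λ c p t : ℂ)) s :=
  mellin_differentiableAt_ofReal_of_isBigO_of_eventuallyEq_zero
    (locallyIntegrable_signedCountRemainder hΛ hΛ' c p)
    (by simpa only [Real.rpow_natCast] using hrem)
    (signedCountRemainder_eventually_eq_zero hΛ hΛ' c p) hs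

theorem tsum_sign_mul_cpow_eq_add_mellin {c : ℝ} {p m n : ℕ}
    (hrem : signedCountRemainder Λ c p =O[atTop] (· ^ m)) (habs : absCount Λ =O[atTop] (· ^ n))
    {s : ℂ} (hm : m < s.re) (hp : p < s.re) (hn : n < s.re) :
    ∑' k, (Real.sign (Λ k) : ℂ) * ((|Λ k| : ℝ) : ℂ) ^ (-s) =
      p * c / (s - p) + (c + s * mellin (fun t => (signedCountRemainder Λ c p t : ℂ)) (-s)) := by
  have hsp : s - p ≠ 0 := fun h => by simp [sub_eq_zero.1 h] at hp
  rw [tsum_sign_mul_cpow_eq_mul_mellin hΛ hΛ' (hn.trans_le' n.cast_nonneg)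
      (mellinConvergent_absCount hΛ hΛ' habs (by simpa using hn)),
    mellin_signedCount c p (mellinConvergent_signedCountRemainder hΛ hΛ' hrem (by simpa using hm))
      (by simpa using hp), show -s + p = -(s - p) by ring]
  field_simp
  ring

end SignedCount

theorem eta_function_meromorphic_continuation_with_residue_general
    (n : ℕ) (hn : 3 ≤ n) (Λ : ℕ → ℝ)
    (hfin : ∀ R : ℝ, 0 < R → {k : ℕ | |Λ k| ≤ R}.Finite)
    (a b C : ℝ)
    (hplus : ∀ lam : ℝ, 1 ≤ lam →
      |(Nat.card {k : ℕ | 0 < Λ k ∧ Λ k < lam} : ℝ) - a * lam ^ n - b * lam ^ (n - 1)|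
        ≤ C * lam ^ (n - 2))
    (hminus : ∀ lam : ℝ, 1 ≤ lam →
      |(Nat.card {k : ℕ | 0 < -Λ k ∧ -Λ k < lam} : ℝ) - a * lam ^ n + b * lam ^ (n - 1)|
        ≤ C * lam ^ (n - 2)) :
    ∃ F : ℂ → ℂ, DifferentiableOn ℂ F {s : ℂ | (n : ℝ) - 2 < s.re} ∧
      ∀ s : ℂ, (n : ℝ) < s.re →
        ∑' k, (Real.sign (Λ k) : ℂ) * ((|Λ k| : ℝ) : ℂ) ^ (-s)
          = 2 * ((n : ℂ) - 1) * (b : ℂ) / (s - ((n : ℂ) - 1)) + F s := by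
  have hΛ := finite_preimage_Ioo hfin
  have hΛ' := finite_preimage_Ioo (Λ := -Λ) (by simpa using hfin)
  have hpos := isBigO_pow_of_abs_le hplus
  have hneg := isBigO_pow_of_abs_le hminus
  have hrem := isBigO_signedCountRemainder hpos hneg
  refine ⟨fun s => (2 * b : ℝ) +
      s * mellin (fun t => (signedCountRemainder Λ (2 * b) (n - 1) t : ℂ)) (-s), ?_, ?_⟩
  · intro s (hs : (n : ℝ) - 2 < s.re)
    have hs' : (-s).re < -((n - 2 : ℕ) : ℝ) := by
      rw [neg_re, Nat.cast_sub (by omega : 2 ≤ n)]; push_cast; linarith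
    exact ((differentiableAt_const _).add (differentiableAt_id.mul
      ((mellin_differentiableAt_signedCountRemainder hΛ hΛ' hrem hs').comp s
        differentiableAt_id.neg))).differentiableWithinAt
  · intro s hs
    rw [tsum_sign_mul_cpow_eq_add_mellin hΛ hΛ' hrem (isBigO_absCount hpos hneg (by omega))
      ((Nat.cast_le.2 (n.sub_le 2)).trans_lt hs) ((Nat.cast_le.2 (n.sub_le 1)).trans_lt hs) hs]
    push_cast [Nat.cast_sub (by omega : 1 ≤ n)]
    ring

/-- Suppose the counting functions `N_±(λ) = #{k : 0 < ±λ_k < λ}` of a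
sequence of nonzero real numbers `(λ_k)` (accumulating only at `±∞`) satisfy two-term
asymptotics `N_±(λ) = aλⁿ ± bλ^{n-1} + O(λ^{n-2})`, `n ≥ 3`.  Then the eta function
`η(s) = Σ_k sgn(λ_k)·|λ_k|^{-s}` (convergent for `Re s > n`) continues meromorphically to
`Re s > n - 2`: there is `F` holomorphic on `Re s > n - 2` with
`η(s) = 2(n-1)b/(s-(n-1)) + F(s)`, so `η` is holomorphic at `s = n` and has at most a
simple pole at `s = n - 1` with residue `2(n-1)b`. -/
theorem eta_function_meromorphic_continuation_with_residue
    (n : ℕ) (hn : 3 ≤ n) (Λ : ℕ → ℝ) (hnz : ∀ k, Λ k ≠ 0)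
    (hfin : ∀ R : ℝ, 0 < R → {k : ℕ | |Λ k| ≤ R}.Finite)
    (a b C : ℝ) (hC : 0 < C)
    (hplus : ∀ lam : ℝ, 1 ≤ lam →
      |(Nat.card {k : ℕ | 0 < Λ k ∧ Λ k < lam} : ℝ) - a * lam ^ n - b * lam ^ (n - 1)|
        ≤ C * lam ^ (n - 2))
    (hminus : ∀ lam : ℝ, 1 ≤ lam →
      |(Nat.card {k : ℕ | 0 < -Λ k ∧ -Λ k < lam} : ℝ) - a * lam ^ n + b * lam ^ (n - 1)|
        ≤ C * lam ^ (n - 2)) :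
    ∃ F : ℂ → ℂ, DifferentiableOn ℂ F {s : ℂ | (n : ℝ) - 2 < s.re} ∧
      ∀ s : ℂ, (n : ℝ) < s.re →
        ∑' k, (Real.sign (Λ k) : ℂ) * ((|Λ k| : ℝ) : ℂ) ^ (-s)
          = 2 * ((n : ℂ) - 1) * (b : ℂ) / (s - ((n : ℂ) - 1)) + F s :=
  eta_function_meromorphic_continuation_with_residue_general n hn Λ hfin a b C hplus hminus
end

section
/- Let n ≥ 2 and m ≥ 1. Let L_prin : ℝⁿ × ℝⁿ → M_m(ℂ) be smooth with Hermitian values, let L_sub : ℝⁿ → M_m(ℂ) be smooth with Hermitian values, let h : ℝⁿ × (ℝⁿ \ {0}) → ℝ be smooth, and let v : ℝⁿ × (ℝⁿ \ {0}) → ℂᵐ (a column) be smooth with L_prin(x,p)·v(x,p) = h(x,p)·v(x,p) and v(x,p)*·v(x,p) = 1 for all (x,p). Let φ : ℝⁿ × (ℝⁿ \ {0}) → ℝ be smooth and set w := e^{iφ}·v. Then at every point (x,p) with p ≠ 0: w*·L_sub·w − (i/2){w*, L_prin − h·I, w} + (i/(n−1))·h·{w*, w} = v*·L_sub·v − (i/2){v*,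 L_prin − h·I, v} + (i/(n−1))·h·{v*, v}. -/
open Matrix Complex

noncomputable section

/-- Partial derivative `∂f/∂x^α` of a scalar function on phase space `ℝⁿ_x × ℝⁿ_p`. -/
def Dx {n : ℕ} (α : Fin n) (f : (Fin n → ℝ) × (Fin n → ℝ) → ℂ)
    (z : (Fin n → ℝ) × (Fin n → ℝ)) : ℂ :=
  fderiv ℝ f z (Pi.single α 1, 0)

/-- Partial derivative `∂f/∂p_α` of a scalar function on phase space `ℝⁿ_x × ℝⁿ_p`. -/
def Dp {n : ℕ} (α : Fin n) (f : (Fin n → ℝ) × (Fin n → ℝ) → ℂ)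
    (z : (Fin n → ℝ) × (Fin n → ℝ)) : ℂ :=
  fderiv ℝ f z (0, Pi.single α 1)

/-- The integrand of the second Weyl coefficient:
`v*·L_sub·v - (i/2){v*, L_prin - h·I, v} + (i/(n-1))·h·{v*, v}`,
where `{F,G,H} = Σ_α F_{x^α} G H_{p_α} - F_{p_α} G H_{x^α}` and
`{F,H} = Σ_α F_{x^α}H_{p_α} - F_{p_α}H_{x^α}`. -/
def weylIntegrand {n m : ℕ}
    (Lprin : (Fin n → ℝ) × (Fin n → ℝ) → Matrix (Fin m) (Fin m) ℂ)
    (Lsub : (Fin n → ℝ) → Matrix (Fin m) (Fin m) ℂ)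
    (h : (Fin n → ℝ) × (Fin n → ℝ) → ℝ)
    (v : (Fin n → ℝ) × (Fin n → ℝ) → Fin m → ℂ)
    (z : (Fin n → ℝ) × (Fin n → ℝ)) : ℂ :=
  (∑ k, ∑ l, (starRingEnd ℂ) (v z k) * Lsub z.1 k l * v z l)
  - Complex.I / 2 *
      (∑ α, ∑ k, ∑ l,
        (Dx α (fun w => (starRingEnd ℂ) (v w k)) z
            * (Lprin z k l - if k = l then ((h z : ℝ) : ℂ) else 0)
            * Dp α (fun w => v w l) z
          - Dp α (fun w => (starRingEnd ℂ) (v w k)) z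
            * (Lprin z k l - if k = l then ((h z : ℝ) : ℂ) else 0)
            * Dx α (fun w => v w l) z))
  + Complex.I / ((n : ℂ) - 1) * ((h z : ℝ) : ℂ) *
      (∑ α, ∑ k,
        (Dx α (fun w => (starRingEnd ℂ) (v w k)) z * Dp α (fun w => v w k) z
          - Dp α (fun w => (starRingEnd ℂ) (v w k)) z * Dx α (fun w => v w k) z))


private lemma hasFDerivAt_conj' {E : Type*} [NormedAddCommGroup E] [NormedSpace ℝ E]
    {f : E → ℂ} {f' : E →L[ℝ] ℂ} {x : E} (hf : HasFDerivAt f f' x) :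
    HasFDerivAt (fun w => (starRingEnd ℂ) (f w))
      ((Complex.conjCLE.toContinuousLinearMap).comp f') x :=
  (Complex.conjCLE.toContinuousLinearMap.hasFDerivAt).comp x hf

private lemma fderiv_conj_apply' {E : Type*} [NormedAddCommGroup E] [NormedSpace ℝ E]
    {f : E → ℂ} {x : E} (hf : DifferentiableAt ℝ f x) (e : E) :
    fderiv ℝ (fun w => (starRingEnd ℂ) (f w)) x e = (starRingEnd ℂ) (fderiv ℝ f x e) := by
  rw [(hasFDerivAt_conj' hf.hasFDerivAt).fderiv]
  simp

private lemma gauge_bracket_aux {m : ℕ} (M : Matrix (Fin m) (Fin m) ℂ) (vv : Fin m → ℂ)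
    (hM1 : ∀ k, ∑ l, M k l * vv l = 0)
    (hM2 : ∀ l, ∑ k, (starRingEnd ℂ) (vv k) * M k l = 0)
    (Ez : ℂ) (hEne : Ez ≠ 0) (hE : (starRingEnd ℂ) Ez = Ez⁻¹)
    (X P : ℝ) (c d : Fin m → ℂ) :
    ∑ k, ∑ l,
      ((starRingEnd ℂ) (Ez * (Complex.I * (X : ℂ) * vv k + c k)) * M k l
          * (Ez * (Complex.I * (P : ℂ) * vv l + d l))
        - (starRingEnd ℂ) (Ez * (Complex.I * (P : ℂ) * vv k + d k)) * M k l
          * (Ez * (Complex.I * (X : ℂ) * vv l + c l)))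
    = ∑ k, ∑ l, ((starRingEnd ℂ) (c k) * M k l * d l
        - (starRingEnd ℂ) (d k) * M k l * c l) := by
  have expand : ∀ k l,
      (starRingEnd ℂ) (Ez * (Complex.I * (X : ℂ) * vv k + c k)) * M k l
          * (Ez * (Complex.I * (P : ℂ) * vv l + d l))
        - (starRingEnd ℂ) (Ez * (Complex.I * (P : ℂ) * vv k + d k)) * M k l
          * (Ez * (Complex.I * (X : ℂ) * vv l + c l))
      = ((starRingEnd ℂ) (c k) * M k l * d l - (starRingEnd ℂ) (d k) * M k l * c l)
        + (Complex.I * (P : ℂ) * (starRingEnd ℂ) (c k)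
            - Complex.I * (X : ℂ) * (starRingEnd ℂ) (d k)) * (M k l * vv l)
        + ((starRingEnd ℂ) (vv k) * M k l)
            * (Complex.I * (P : ℂ) * c l - Complex.I * (X : ℂ) * d l) := by
    intro k l
    simp only [_root_.map_mul, map_add, Complex.conj_I, Complex.conj_ofReal, hE]
    field_simp
    ring
  calc ∑ k, ∑ l,
      ((starRingEnd ℂ) (Ez * (Complex.I * (X : ℂ) * vv k + c k)) * M k l
          * (Ez * (Complex.I * (P : ℂ) * vv l + d l))
        - (starRingEnd ℂ) (Ez * (Complex.I * (P : ℂ) * vv k + d k)) * M k l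
          * (Ez * (Complex.I * (X : ℂ) * vv l + c l)))
      = ∑ k, ∑ l,
        (((starRingEnd ℂ) (c k) * M k l * d l - (starRingEnd ℂ) (d k) * M k l * c l)
          + (Complex.I * (P : ℂ) * (starRingEnd ℂ) (c k)
              - Complex.I * (X : ℂ) * (starRingEnd ℂ) (d k)) * (M k l * vv l)
          + ((starRingEnd ℂ) (vv k) * M k l)
              * (Complex.I * (P : ℂ) * c l - Complex.I * (X : ℂ) * d l)) :=
        Finset.sum_congr rfl fun k _ => Finset.sum_congr rfl fun l _ => expand k l
    _ = (∑ k, ∑ l, ((starRingEnd ℂ) (c k) * M k l * d l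
            - (starRingEnd ℂ) (d k) * M k l * c l))
        + (∑ k, ∑ l, (Complex.I * (P : ℂ) * (starRingEnd ℂ) (c k)
              - Complex.I * (X : ℂ) * (starRingEnd ℂ) (d k)) * (M k l * vv l))
        + (∑ k, ∑ l, ((starRingEnd ℂ) (vv k) * M k l)
              * (Complex.I * (P : ℂ) * c l - Complex.I * (X : ℂ) * d l)) := by
        simp [Finset.sum_add_distrib]
    _ = ∑ k, ∑ l, ((starRingEnd ℂ) (c k) * M k l * d l
            - (starRingEnd ℂ) (d k) * M k l * c l) := by
        have hA : (∑ k, ∑ l, (Complex.I * (P : ℂ) * (starRingEnd ℂ) (c k)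
              - Complex.I * (X : ℂ) * (starRingEnd ℂ) (d k)) * (M k l * vv l)) = 0 := by
          simp [← Finset.mul_sum, hM1]
        have hB : (∑ k, ∑ l, ((starRingEnd ℂ) (vv k) * M k l)
              * (Complex.I * (P : ℂ) * c l - Complex.I * (X : ℂ) * d l)) = 0 := by
          rw [Finset.sum_comm]
          simp [← Finset.sum_mul, hM2]
        rw [hA, hB, add_zero, add_zero]

private lemma gauge_pb_aux {m : ℕ} (vv c d : Fin m → ℂ)
    (Ez : ℂ) (hEne : Ez ≠ 0) (hE : (starRingEnd ℂ) Ez = Ez⁻¹) (X P : ℝ)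
    (hx : ∑ k, ((starRingEnd ℂ) (c k) * vv k + (starRingEnd ℂ) (vv k) * c k) = 0)
    (hp : ∑ k, ((starRingEnd ℂ) (d k) * vv k + (starRingEnd ℂ) (vv k) * d k) = 0) :
    ∑ k, ((starRingEnd ℂ) (Ez * (Complex.I * (X : ℂ) * vv k + c k))
          * (Ez * (Complex.I * (P : ℂ) * vv k + d k))
        - (starRingEnd ℂ) (Ez * (Complex.I * (P : ℂ) * vv k + d k))
          * (Ez * (Complex.I * (X : ℂ) * vv k + c k)))
    = ∑ k, ((starRingEnd ℂ) (c k) * d k - (starRingEnd ℂ) (d k) * c k) := by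
  have expand : ∀ k,
      (starRingEnd ℂ) (Ez * (Complex.I * (X : ℂ) * vv k + c k))
          * (Ez * (Complex.I * (P : ℂ) * vv k + d k))
        - (starRingEnd ℂ) (Ez * (Complex.I * (P : ℂ) * vv k + d k))
          * (Ez * (Complex.I * (X : ℂ) * vv k + c k))
      = ((starRingEnd ℂ) (c k) * d k - (starRingEnd ℂ) (d k) * c k)
        + Complex.I * (P : ℂ)
            * ((starRingEnd ℂ) (c k) * vv k + (starRingEnd ℂ) (vv k) * c k)
        - Complex.I * (X : ℂ)
            * ((starRingEnd ℂ) (d k) * vv k + (starRingEnd ℂ) (vv k) * d k) := by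
    intro k
    simp only [_root_.map_mul, map_add, Complex.conj_I, Complex.conj_ofReal, hE]
    field_simp
    ring
  calc ∑ k, ((starRingEnd ℂ) (Ez * (Complex.I * (X : ℂ) * vv k + c k))
          * (Ez * (Complex.I * (P : ℂ) * vv k + d k))
        - (starRingEnd ℂ) (Ez * (Complex.I * (P : ℂ) * vv k + d k))
          * (Ez * (Complex.I * (X : ℂ) * vv k + c k)))
      = ∑ k, (((starRingEnd ℂ) (c k) * d k - (starRingEnd ℂ) (d k) * c k)
          + Complex.I * (P : ℂ)
              * ((starRingEnd ℂ) (c k) * vv k + (starRingEnd ℂ) (vv k) * c k)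
          - Complex.I * (X : ℂ)
              * ((starRingEnd ℂ) (d k) * vv k + (starRingEnd ℂ) (vv k) * d k)) :=
        Finset.sum_congr rfl fun k _ => expand k
    _ = (∑ k, ((starRingEnd ℂ) (c k) * d k - (starRingEnd ℂ) (d k) * c k))
        + Complex.I * (P : ℂ)
            * (∑ k, ((starRingEnd ℂ) (c k) * vv k + (starRingEnd ℂ) (vv k) * c k))
        - Complex.I * (X : ℂ)
            * (∑ k, ((starRingEnd ℂ) (d k) * vv k + (starRingEnd ℂ) (vv k) * d k)) := by
        simp [Finset.sum_add_distrib, Finset.sum_sub_distrib, Finset.mul_sum, mul_add]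
    _ = ∑ k, ((starRingEnd ℂ) (c k) * d k - (starRingEnd ℂ) (d k) * c k) := by
        rw [hx, hp]; ring

/-- The integrand of the second Weyl coefficient,
`v*·L_sub·v - (i/2){v*, L_prin - h·I, v} + (i/(n-1))·h·{v*, v}`, evaluated on a smooth
normalised eigenvector `v` of the Hermitian principal symbol `L_prin` with eigenvalue
`h`, is invariant under the gauge transformation `v ↦ e^{iφ}·v`. -/
theorem weyl_integrand_gauge_invariance_eigenvector
    {n m : ℕ} (hn : 2 ≤ n) (hm : 1 ≤ m)
    (Lprin : (Fin n → ℝ) × (Fin n → ℝ) → Matrix (Fin m) (Fin m) ℂ)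
    (hLpSmooth : ∀ k l, ContDiff ℝ (⊤ : ℕ∞) (fun z => Lprin z k l))
    (hLpHerm : ∀ z, (Lprin z).IsHermitian)
    (Lsub : (Fin n → ℝ) → Matrix (Fin m) (Fin m) ℂ)
    (hLsSmooth : ∀ k l, ContDiff ℝ (⊤ : ℕ∞) (fun x => Lsub x k l))
    (hLsHerm : ∀ x, (Lsub x).IsHermitian)
    (h : (Fin n → ℝ) × (Fin n → ℝ) → ℝ)
    (hhSmooth : ContDiffOn ℝ (⊤ : ℕ∞) h {z : (Fin n → ℝ) × (Fin n → ℝ) | z.2 ≠ 0})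
    (v : (Fin n → ℝ) × (Fin n → ℝ) → Fin m → ℂ)
    (hvSmooth : ∀ k, ContDiffOn ℝ (⊤ : ℕ∞) (fun z => v z k)
      {z : (Fin n → ℝ) × (Fin n → ℝ) | z.2 ≠ 0})
    (heig : ∀ z : (Fin n → ℝ) × (Fin n → ℝ), z.2 ≠ 0 →
      Lprin z *ᵥ v z = ((h z : ℝ) : ℂ) • v z)
    (hnorm : ∀ z : (Fin n → ℝ) × (Fin n → ℝ), z.2 ≠ 0 →
      ∑ k, (starRingEnd ℂ) (v z k) * v z k = 1)
    (φ : (Fin n → ℝ) × (Fin n → ℝ) → ℝ)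
    (hφ : ContDiffOn ℝ (⊤ : ℕ∞) φ {z : (Fin n → ℝ) × (Fin n → ℝ) | z.2 ≠ 0}) :
    ∀ z : (Fin n → ℝ) × (Fin n → ℝ), z.2 ≠ 0 →
      weylIntegrand Lprin Lsub h
        (fun w k => Complex.exp (Complex.I * ((φ w : ℝ) : ℂ)) * v w k) z
      = weylIntegrand Lprin Lsub h v z := by
  intro z hz
  have hU : IsOpen {w : (Fin n → ℝ) × (Fin n → ℝ) | w.2 ≠ 0} :=
    IsOpen.preimage continuous_snd isOpen_ne
  have hnhds : {w : (Fin n → ℝ) × (Fin n → ℝ) | w.2 ≠ 0} ∈ nhds z := hU.mem_nhds hz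
  have hvdiff : ∀ k, DifferentiableAt ℝ (fun w => v w k) z := fun k =>
    (((hvSmooth k).differentiableOn (by simp)).differentiableAt hnhds)
  have hφdiff : DifferentiableAt ℝ φ z :=
    ((hφ.differentiableOn (by simp)).differentiableAt hnhds)
  set Ez : ℂ := Complex.exp (Complex.I * ((φ z : ℝ) : ℂ)) with hEzdef
  have hEne : Ez ≠ 0 := Complex.exp_ne_zero _
  have hE : (starRingEnd ℂ) Ez = Ez⁻¹ := by
    rw [hEzdef, ← Complex.exp_conj, ← Complex.exp_neg]
    congr 1
    simp [Complex.conj_ofReal]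
  have hφF : HasFDerivAt φ (fderiv ℝ φ z) z := hφdiff.hasFDerivAt
  have hvF : ∀ k, HasFDerivAt (fun w => v w k) (fderiv ℝ (fun w => v w k) z) z :=
    fun k => (hvdiff k).hasFDerivAt
  have hexpF : HasFDerivAt (fun w => Complex.exp (Complex.I * ((φ w : ℝ) : ℂ)))
      (Ez • (Complex.I • (Complex.ofRealCLM.comp (fderiv ℝ φ z)))) z := by
    have h1 : HasFDerivAt (fun w => ((φ w : ℝ) : ℂ))
        (Complex.ofRealCLM.comp (fderiv ℝ φ z)) z :=
      (Complex.ofRealCLM.hasFDerivAt).comp z hφF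
    exact (h1.const_mul Complex.I).cexp
  have hwF : ∀ k, HasFDerivAt (fun w => Complex.exp (Complex.I * ((φ w : ℝ) : ℂ)) * v w k)
      (Ez • (fderiv ℝ (fun w => v w k) z)
        + v z k • (Ez • (Complex.I • (Complex.ofRealCLM.comp (fderiv ℝ φ z))))) z :=
    fun k => hexpF.mul (hvF k)
  have hDw : ∀ (k : Fin m) (e : (Fin n → ℝ) × (Fin n → ℝ)),
      fderiv ℝ (fun w => Complex.exp (Complex.I * ((φ w : ℝ) : ℂ)) * v w k) z e
      = Ez * (Complex.I * ((fderiv ℝ φ z e : ℝ) : ℂ) * v z k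
          + fderiv ℝ (fun w => v w k) z e) := by
    intro k e
    rw [(hwF k).fderiv]
    simp only [ContinuousLinearMap.add_apply, ContinuousLinearMap.smul_apply,
      ContinuousLinearMap.comp_apply, Complex.ofRealCLM_apply, smul_eq_mul]
    ring
  have hDwc : ∀ (k : Fin m) (e : (Fin n → ℝ) × (Fin n → ℝ)),
      fderiv ℝ (fun w => (starRingEnd ℂ) (Complex.exp (Complex.I * ((φ w : ℝ) : ℂ)) * v w k)) z e
      = (starRingEnd ℂ) (Ez * (Complex.I * ((fderiv ℝ φ z e : ℝ) : ℂ) * v z k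
          + fderiv ℝ (fun w => v w k) z e)) := by
    intro k e
    rw [fderiv_conj_apply' ((hwF k).differentiableAt) e, hDw k e]
  have hDvc : ∀ (k : Fin m) (e : (Fin n → ℝ) × (Fin n → ℝ)),
      fderiv ℝ (fun w => (starRingEnd ℂ) (v w k)) z e
      = (starRingEnd ℂ) (fderiv ℝ (fun w => v w k) z e) :=
    fun k e => fderiv_conj_apply' (hvdiff k) e
  -- derivative of the normalisation
  have hnormD : ∀ e : (Fin n → ℝ) × (Fin n → ℝ),
      ∑ k, ((starRingEnd ℂ) (fderiv ℝ (fun w => v w k) z e) * v z k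
        + (starRingEnd ℂ) (v z k) * fderiv ℝ (fun w => v w k) z e) = 0 := by
    intro e
    have hsumF : HasFDerivAt (fun w => ∑ k, (starRingEnd ℂ) (v w k) * v w k)
        (∑ k, ((starRingEnd ℂ) (v z k) • (fderiv ℝ (fun w => v w k) z)
          + v z k • ((Complex.conjCLE.toContinuousLinearMap).comp
              (fderiv ℝ (fun w => v w k) z)))) z := by
      apply HasFDerivAt.fun_sum
      intro k _
      exact (hasFDerivAt_conj' (hvF k)).mul (hvF k)
    have h0 : fderiv ℝ (fun w => ∑ k, (starRingEnd ℂ) (v w k) * v w k) z = 0 := by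
      have heq : (fun w => ∑ k, (starRingEnd ℂ) (v w k) * v w k)
          =ᶠ[nhds z] (fun _ => (1 : ℂ)) :=
        Filter.eventuallyEq_of_mem hnhds (fun w hw => hnorm w hw)
      rw [heq.fderiv_eq, fderiv_fun_const]; rfl
    have hcl : (∑ k, ((starRingEnd ℂ) (v z k) • (fderiv ℝ (fun w => v w k) z)
          + v z k • ((Complex.conjCLE.toContinuousLinearMap).comp
              (fderiv ℝ (fun w => v w k) z))))
        = (0 : ((Fin n → ℝ) × (Fin n → ℝ)) →L[ℝ] ℂ) := (hsumF.fderiv).symm.trans h0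
    have h1 : (∑ k, ((starRingEnd ℂ) (v z k) • (fderiv ℝ (fun w => v w k) z)
          + v z k • ((Complex.conjCLE.toContinuousLinearMap).comp
              (fderiv ℝ (fun w => v w k) z)))) e = 0 := by
      rw [hcl]; simp
    rw [← h1]
    simp only [ContinuousLinearMap.sum_apply, ContinuousLinearMap.add_apply,
      ContinuousLinearMap.smul_apply, ContinuousLinearMap.comp_apply,
      ContinuousLinearEquiv.coe_coe, Complex.conjCLE_apply, smul_eq_mul]
    exact Finset.sum_congr rfl fun k _ => by ring
  -- eigenvector identities
  have heigk : ∀ k, ∑ l, Lprin z k l * v z l = ((h z : ℝ) : ℂ) * v z k := by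
    intro k
    have := congrFun (heig z hz) k
    simpa [Matrix.mulVec, dotProduct] using this
  have E1 : ∀ k, ∑ l, (Lprin z k l - if k = l then ((h z : ℝ) : ℂ) else 0) * v z l = 0 := by
    intro k
    simp only [sub_mul, Finset.sum_sub_distrib, heigk k, ite_mul, zero_mul]
    rw [Finset.sum_ite_eq]
    simp
  have E2 : ∀ l, ∑ k, (starRingEnd ℂ) (v z k)
      * (Lprin z k l - if k = l then ((h z : ℝ) : ℂ) else 0) = 0 := by
    intro l
    have hconjL : ∀ k, (starRingEnd ℂ) (v z k) * Lprin z k l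
        = (starRingEnd ℂ) (Lprin z l k * v z k) := by
      intro k
      rw [_root_.map_mul, ← (hLpHerm z).apply k l]
      simp only [starRingEnd_apply]
      ring
    simp only [mul_sub, Finset.sum_sub_distrib]
    rw [Finset.sum_congr rfl fun k _ => hconjL k, ← map_sum, heigk l]
    simp only [mul_ite, mul_zero]
    rw [Finset.sum_ite_eq']
    simp only [Finset.mem_univ, if_true, _root_.map_mul, Complex.conj_ofReal]
    ring
  -- now the main computation
  simp only [weylIntegrand, Dx, Dp, hDw, hDwc, hDvc]
  congr 1
  · congr 1
    · refine Finset.sum_congr rfl fun k _ => Finset.sum_congr rfl fun l _ => ?_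
      simp only [_root_.map_mul, ← hEzdef, hE]
      field_simp
    · congr 1
      refine Finset.sum_congr rfl fun α _ => ?_
      exact gauge_bracket_aux _ _ E1 E2 Ez hEne hE _ _ _ _
  · congr 1
    refine Finset.sum_congr rfl fun α _ => ?_
    refine gauge_pb_aux _ _ _ Ez hEne hE _ _ ?_ ?_
    · exact hnormD (Pi.single α 1, 0)
    · exact hnormD (0, Pi.single α 1)


end
end

section
/- Let n, m ≥ 1, let A¹, …, Aⁿ and B be smooth maps ℝⁿ → M_m(ℂ), and let R : ℝⁿ → M_m(ℂ) be smooth with R(x) unitary for every x. Define the first order differential operator L by (Lu)(x) := Σ_α A^α(x)·(−i ∂u/∂x^α)(x) + B(x)·u(x) for smooth u : ℝⁿ → ℂᵐ. Then: (a) for every smooth u, R*(L(R·u)) = Σ_α Ã^α·(−i ∂u/∂x^α) + B̃·u, where Ã^α := R*A^αR and B̃ := R*BR − i Σ_α R*A^α(∂R/∂x^α); and (b) the subprincipal symbols L_sub := B + (i/2) Σ_α ∂A^α/∂x^α and L̃_sub := B̃ + (i/2) Σ_α ∂Ã^α/∂x^α satisfy L̃_sub = R*·L_sub·R + (i/2)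 Σ_α ((∂R*/∂x^α)·A^α·R − R*·A^α·(∂R/∂x^α)). -/
open Matrix

noncomputable section

/-- Entrywise partial derivative `∂F/∂x^α` of a matrix-valued function on `ℝⁿ`. -/
def pdM {n m : ℕ} (α : Fin n) (F : (Fin n → ℝ) → Matrix (Fin m) (Fin m) ℂ)
    (x : Fin n → ℝ) : Matrix (Fin m) (Fin m) ℂ :=
  Matrix.of fun i j => fderiv ℝ (fun y => F y i j) x (Pi.single α 1)

/-- Entrywise partial derivative `∂u/∂x^α` of a vector-valued function on `ℝⁿ`. -/
def pdV {n m : ℕ} (α : Fin n) (u : (Fin n → ℝ) → Fin m → ℂ)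
    (x : Fin n → ℝ) : Fin m → ℂ :=
  fun i => fderiv ℝ (fun y => u y i) x (Pi.single α 1)

lemma pdV_mulVec {n m : ℕ} (α : Fin n) (F : (Fin n → ℝ) → Matrix (Fin m) (Fin m) ℂ)
    (u : (Fin n → ℝ) → Fin m → ℂ) (x : Fin n → ℝ)
    (hF : ∀ i j, DifferentiableAt ℝ (fun y => F y i j) x)
    (hu : ∀ i, DifferentiableAt ℝ (fun y => u y i) x) :
    pdV α (fun y => F y *ᵥ u y) x = pdM α F x *ᵥ u x + F x *ᵥ pdV α u x := by
  funext i
  have h1 : (fun y => (F y *ᵥ u y) i) = fun y => ∑ k, F y i k * u y k := by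
    funext y; simp [Matrix.mulVec, dotProduct]
  have h2 : fderiv ℝ (fun y => ∑ k, F y i k * u y k) x
      = ∑ k, fderiv ℝ (fun y => F y i k * u y k) x :=
    fderiv_fun_sum (fun k _ => ((hF i k).mul (hu k)))
  have h3 : ∀ k, fderiv ℝ (fun y => F y i k * u y k) x
      = F x i k • fderiv ℝ (fun y => u y k) x + u x k • fderiv ℝ (fun y => F y i k) x :=
    fun k => fderiv_fun_mul (hF i k) (hu k)
  simp only [pdV, pdM, h1, h2]
  simp only [ContinuousLinearMap.coe_sum', Finset.sum_apply, h3,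
    ContinuousLinearMap.add_apply, ContinuousLinearMap.coe_smul', Pi.add_apply, Pi.smul_apply,
    Matrix.mulVec, dotProduct, Matrix.of_apply, Pi.add_apply, Finset.sum_add_distrib]
  rw [add_comm]
  congr 1 <;> exact Finset.sum_congr rfl fun k _ => by simp [pdV, smul_eq_mul, mul_comm]

lemma pdM_mul {n m : ℕ} (α : Fin n) (F G : (Fin n → ℝ) → Matrix (Fin m) (Fin m) ℂ)
    (x : Fin n → ℝ)
    (hF : ∀ i j, DifferentiableAt ℝ (fun y => F y i j) x)
    (hG : ∀ i j, DifferentiableAt ℝ (fun y => G y i j) x) :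
    pdM α (fun y => F y * G y) x = pdM α F x * G x + F x * pdM α G x := by
  ext i j
  have h1 : (fun y => (F y * G y) i j) = fun y => ∑ k, F y i k * G y k j := by
    funext y; simp [Matrix.mul_apply]
  have h2 : fderiv ℝ (fun y => ∑ k, F y i k * G y k j) x
      = ∑ k, fderiv ℝ (fun y => F y i k * G y k j) x :=
    fderiv_fun_sum (fun k _ => ((hF i k).mul (hG k j)))
  have h3 : ∀ k, fderiv ℝ (fun y => F y i k * G y k j) x
      = F x i k • fderiv ℝ (fun y => G y k j) x + G x k j • fderiv ℝ (fun y => F y i k) x :=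
    fun k => fderiv_fun_mul (hF i k) (hG k j)
  simp only [pdM, Matrix.of_apply, h1, h2]
  simp only [ContinuousLinearMap.coe_sum', Finset.sum_apply, h3,
    ContinuousLinearMap.add_apply, ContinuousLinearMap.coe_smul', Pi.add_apply, Pi.smul_apply,
    Matrix.add_apply, Matrix.mul_apply, Matrix.of_apply, Finset.sum_add_distrib]
  rw [add_comm]
  congr 1 <;> exact Finset.sum_congr rfl fun k _ => by simp [smul_eq_mul, mul_comm]

section helpers
variable {n m : ℕ} {x : Fin n → ℝ}

lemma diff_entry_mul {F G : (Fin n → ℝ) → Matrix (Fin m) (Fin m) ℂ}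
    (hF : ∀ i j, DifferentiableAt ℝ (fun y => F y i j) x)
    (hG : ∀ i j, DifferentiableAt ℝ (fun y => G y i j) x) :
    ∀ i j, DifferentiableAt ℝ (fun y => (F y * G y) i j) x := by
  intro i j
  have h : (fun y => (F y * G y) i j) = fun y => ∑ k, F y i k * G y k j := by
    funext y; simp [Matrix.mul_apply]
  rw [h]
  exact DifferentiableAt.fun_sum fun k _ => (hF i k).mul (hG k j)

lemma diff_entry_star {R : (Fin n → ℝ) → Matrix (Fin m) (Fin m) ℂ}
    (hR : ∀ i j, DifferentiableAt ℝ (fun y => R y i j) x) :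
    ∀ i j, DifferentiableAt ℝ (fun y => (R y)ᴴ i j) x := by
  intro i j
  have h : (fun y => (R y)ᴴ i j) = fun y => star (R y j i) := by
    funext y; simp [Matrix.conjTranspose_apply]
  rw [h]
  exact (hR j i).star

lemma mulVec_sumVec {ι : Type*} (s : Finset ι) (M : Matrix (Fin m) (Fin m) ℂ)
    (v : ι → Fin m → ℂ) : M *ᵥ (∑ α ∈ s, v α) = ∑ α ∈ s, M *ᵥ v α := by
  ext i
  simp [Matrix.mulVec, dotProduct, Finset.mul_sum, Finset.sum_apply]
  rw [Finset.sum_comm]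

lemma sumM_mulVec {ι : Type*} (s : Finset ι) (M : ι → Matrix (Fin m) (Fin m) ℂ)
    (v : Fin m → ℂ) : (∑ α ∈ s, M α) *ᵥ v = ∑ α ∈ s, M α *ᵥ v := by
  ext i
  simp only [Matrix.mulVec, dotProduct, Finset.sum_apply, Matrix.sum_apply,
    Finset.sum_mul]
  rw [Finset.sum_comm]

end helpers

/-- The first order differential operator `L = Σ_α A^α(x)(-i ∂/∂x^α) + B(x)`. -/
def Lop {n m : ℕ} (A : Fin n → (Fin n → ℝ) → Matrix (Fin m) (Fin m) ℂ)
    (B : (Fin n → ℝ) → Matrix (Fin m) (Fin m) ℂ)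
    (u : (Fin n → ℝ) → Fin m → ℂ) (x : Fin n → ℝ) : Fin m → ℂ :=
  (∑ α, A α x *ᵥ ((-Complex.I) • pdV α u x)) + B x *ᵥ u x

/-- Gauge transformation `L ↦ R*LR` of a first order operator
`L = Σ_α A^α(x)(-i∂/∂x^α) + B(x)` with `R(x)` unitary:
(a) `R*(L(R·u)) = Σ_α Ã^α(-i∂u/∂x^α) + B̃·u` with `Ã^α = R*A^αR` and
`B̃ = R*BR - iΣ_α R*A^α(∂R/∂x^α)`;
(b) the subprincipal symbols satisfy
`L̃_sub = R*·L_sub·R + (i/2)Σ_α((∂R*/∂x^α)A^αR - R*A^α(∂R/∂x^α))`. -/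
theorem gauge_transformation_of_first_order_operator
    {n m : ℕ} (hn : 1 ≤ n) (hm : 1 ≤ m)
    (A : Fin n → (Fin n → ℝ) → Matrix (Fin m) (Fin m) ℂ)
    (B : (Fin n → ℝ) → Matrix (Fin m) (Fin m) ℂ)
    (R : (Fin n → ℝ) → Matrix (Fin m) (Fin m) ℂ)
    (hA : ∀ α i j, ContDiff ℝ (⊤ : ℕ∞) (fun x => A α x i j))
    (hB : ∀ i j, ContDiff ℝ (⊤ : ℕ∞) (fun x => B x i j))
    (hR : ∀ i j, ContDiff ℝ (⊤ : ℕ∞) (fun x => R x i j))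
    (hRunitary : ∀ x, (R x)ᴴ * R x = 1 ∧ R x * (R x)ᴴ = 1) :
    (∀ u : (Fin n → ℝ) → Fin m → ℂ, (∀ i, ContDiff ℝ (⊤ : ℕ∞) (fun x => u x i)) →
      ∀ x : Fin n → ℝ,
        (R x)ᴴ *ᵥ Lop A B (fun y => R y *ᵥ u y) x
          = (∑ α, ((R x)ᴴ * A α x * R x) *ᵥ ((-Complex.I) • pdV α u x))
            + ((R x)ᴴ * B x * R x
                - Complex.I • ∑ α, (R x)ᴴ * A α x * pdM α R x) *ᵥ u x) ∧
    (∀ x : Fin n → ℝ,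
      ((R x)ᴴ * B x * R x - Complex.I • ∑ α, (R x)ᴴ * A α x * pdM α R x)
          + (Complex.I / 2) • ∑ α, pdM α (fun y => (R y)ᴴ * A α y * R y) x
        = (R x)ᴴ * (B x + (Complex.I / 2) • ∑ α, pdM α (A α) x) * R x
          + (Complex.I / 2) • ∑ α,
              (pdM α (fun y => (R y)ᴴ) x * A α x * R x
                - (R x)ᴴ * A α x * pdM α R x)) := by
  have hRd : ∀ (x : Fin n → ℝ) i j, DifferentiableAt ℝ (fun y => R y i j) x :=
    fun x i j => ((hR i j).differentiable (by simp)).differentiableAt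
  have hAd : ∀ α (x : Fin n → ℝ) i j, DifferentiableAt ℝ (fun y => A α y i j) x :=
    fun α x i j => ((hA α i j).differentiable (by simp)).differentiableAt
  constructor
  · intro u hu x
    have hud : ∀ i, DifferentiableAt ℝ (fun y => u y i) x :=
      fun i => ((hu i).differentiable (by simp)).differentiableAt
    have hpd : ∀ α, pdV α (fun y => R y *ᵥ u y) x
        = pdM α R x *ᵥ u x + R x *ᵥ pdV α u x :=
      fun α => pdV_mulVec α R u x (hRd x) hud
    simp only [Lop, hpd, smul_add, Matrix.mulVec_add, Matrix.mulVec_smul,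
      mulVec_mulVec, mulVec_sumVec, Matrix.sub_mulVec, Matrix.smul_mulVec,
      sumM_mulVec, Finset.sum_add_distrib, Finset.smul_sum]
    have hRR : (R x)ᴴ * R x = 1 := (hRunitary x).1
    simp only [← mul_assoc]
    simp only [neg_smul, one_smul, neg_one_smul, Finset.sum_neg_distrib]
    abel
  · intro x
    have key : ∀ α, pdM α (fun y => (R y)ᴴ * A α y * R y) x
        = (pdM α (fun y => (R y)ᴴ) x * A α x + (R x)ᴴ * pdM α (A α) x) * R x
          + ((R x)ᴴ * A α x) * pdM α R x := by
      intro α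
      have h1 := pdM_mul α (fun y => (R y)ᴴ * A α y) R x
        (diff_entry_mul (diff_entry_star (hRd x)) (hAd α x)) (hRd x)
      have h2 := pdM_mul α (fun y => (R y)ᴴ) (A α) x (diff_entry_star (hRd x)) (hAd α x)
      rw [h1, h2]
    simp only [key]
    simp only [add_mul, mul_add, Matrix.mul_smul, Matrix.smul_mul,
      Matrix.mul_sum, Matrix.sum_mul, Finset.sum_add_distrib, Finset.sum_sub_distrib,
      smul_add, smul_sub, Finset.smul_sum, mul_assoc]
    have hI : ∀ M : Matrix (Fin m) (Fin m) ℂ,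
        Complex.I • M = (Complex.I / 2) • M + (Complex.I / 2) • M := by
      intro M; rw [← add_smul]; norm_num
    simp only [hI, Finset.sum_add_distrib]
    abel


end
end
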